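/- arXiv:1904.13227 — 15 statements merged into one kernel-verified Lean document; each statement's English description precedes it below -/
import Mathlib

section
/- A topological space X is κ-Fréchet–Urysohn if and only if every point x ∈ X is contained in a dense κ-Fréchet–Urysohn subspace of X. -/
open Filter Topology

/-- A topological space is κ-Fréchet–Urysohn if for every open set `U` and every point
`x` in the closure of `U` there is a sequence in `U` converging to `x`. -/
def KappaFrechetUrysohn (X : Type*) [TopologicalSpace X] : Prop :=
  ∀ U : Set X, IsOpen U → ∀ x ∈ closure U,
    ∃ u : ℕ → X, (∀ n, u n ∈ U) ∧ Tendsto u atTop (𝓝 x)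

theorem stmt0 {X : Type*} [TopologicalSpace X] :
    KappaFrechetUrysohn X ↔
      ∀ x : X, ∃ Y : Set X, x ∈ Y ∧ Dense Y ∧ KappaFrechetUrysohn ↥Y := by
  constructor
  · intro h x
    refine ⟨Set.univ, Set.mem_univ x, dense_univ, ?_⟩
    intro U hU z hz
    have hU' : IsOpen (Subtype.val '' U : Set X) :=
      (Homeomorph.Set.univ X).isOpenMap U hU
    have hz' : (z : X) ∈ closure (Subtype.val '' U : Set X) := closure_subtype.mp hz
    obtain ⟨u, hu, hut⟩ := h _ hU' z hz'
    refine ⟨fun n => ⟨u n, Set.mem_univ _⟩, ?_, ?_⟩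
    · intro n
      obtain ⟨y, hy, hyv⟩ := hu n
      show (⟨u n, Set.mem_univ _⟩ : Set.univ) ∈ U
      have h3 : y = (⟨u n, Set.mem_univ _⟩ : Set.univ) := Subtype.ext hyv
      rwa [h3] at hy
    · rw [Topology.IsEmbedding.subtypeVal.tendsto_nhds_iff]
      exact hut
  · intro h U hU x hx
    obtain ⟨Y, hxY, hYd, hYk⟩ := h x
    have hx' : (⟨x, hxY⟩ : Y) ∈ closure (Subtype.val ⁻¹' U) := by
      rw [closure_subtype]
      have h1 : Subtype.val '' (Subtype.val ⁻¹' U : Set Y) = U ∩ Y := by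
        rw [Set.image_preimage_eq_inter_range, Subtype.range_coe]
      rw [h1]
      have h2 : closure U ⊆ closure (U ∩ Y) := by
        rw [← closure_closure (s := U ∩ Y)]
        exact closure_mono (hYd.open_subset_closure_inter hU)
      exact h2 hx
    obtain ⟨u, hu, hut⟩ := hYk _ (hU.preimage continuous_subtype_val) _ hx'
    exact ⟨fun n => (u n : X), hu, (continuous_subtype_val.tendsto _).comp hut⟩
end

section
/- Let Y be a dense subset of a topological group X. If Y (with the subspace topology) is κ-Fréchet–Urysohn, then X is κ-Fréchet–Urysohn. -/
open Filter Topology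

theorem Dense.exists_seq_tendsto_of_kappaFrechetUrysohn {X : Type*} [TopologicalSpace X]
    {Y : Set X} (hY : Dense Y) (h : KappaFrechetUrysohn Y) {U : Set X} (hU : IsOpen U)
    {y : X} (hyY : y ∈ Y) (hyU : y ∈ closure U) :
    ∃ u : ℕ → X, (∀ n, u n ∈ U) ∧ Tendsto u atTop (𝓝 y) := by
  have hy : (⟨y, hyY⟩ : Y) ∈ closure (Subtype.val ⁻¹' U) := by
    rw [closure_subtype, Set.image_preimage_eq_inter_range, Subtype.range_coe]
    exact closure_minimal (hY.open_subset_closure_inter hU) isClosed_closure hyU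
  obtain ⟨v, hvU, hv⟩ := h _ (hU.preimage continuous_subtype_val) _ hy
  exact ⟨fun n ↦ v n, hvU, (continuous_subtype_val.tendsto _).comp hv⟩

theorem kappaFrechetUrysohn_of_exists_seq_tendsto_at {X : Type*} [TopologicalSpace X] [Group X]
    [IsTopologicalGroup X] (y : X)
    (hy : ∀ U : Set X, IsOpen U → y ∈ closure U →
      ∃ u : ℕ → X, (∀ n, u n ∈ U) ∧ Tendsto u atTop (𝓝 y)) :
    KappaFrechetUrysohn X := by
  intro U hU x hx
  let e : X ≃ₜ X := Homeomorph.mulLeft (x * y⁻¹)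
  have hex : e y = x := inv_mul_cancel_right x y
  have hyU : y ∈ closure (e ⁻¹' U) := by
    rw [← e.preimage_closure, Set.mem_preimage, hex]
    exact hx
  obtain ⟨v, hvU, hv⟩ := hy _ (hU.preimage e.continuous) hyU
  exact ⟨e ∘ v, hvU, hex ▸ (e.continuous.tendsto y).comp hv⟩

theorem stmt1 {X : Type*} [TopologicalSpace X] [Group X] [IsTopologicalGroup X]
    (Y : Set X) (hY : Dense Y) (h : KappaFrechetUrysohn ↥Y) :
    KappaFrechetUrysohn X := by
  obtain ⟨y, hyY⟩ := hY.nonempty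
  exact kappaFrechetUrysohn_of_exists_seq_tendsto_at y fun U hU hyU ↦
    hY.exists_seq_tendsto_of_kappaFrechetUrysohn h hU hyY hyU
end

section
/- Let Y be a dense subset of a homogeneous topological space X (i.e., for any two points of X there is a self-homeomorphism of X mapping one to the other). If Y is κ-Fréchet–Urysohn in the subspace topology, then X is κ-Fréchet–Urysohn. -/
open Filter Topology

/-! The property is local at a point, transported by homeomorphisms and inherited from a dense
subspace at the points of that subspace; homogeneity then spreads it from one point to all. -/

def KappaFrechetUrysohnAt {X : Type*} [TopologicalSpace X] (x : X) : Prop :=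
  ∀ U : Set X, IsOpen U → x ∈ closure U →
    ∃ u : ℕ → X, (∀ n, u n ∈ U) ∧ Tendsto u atTop (𝓝 x)

theorem kappaFrechetUrysohn_iff_forall_kappaFrechetUrysohnAt {X : Type*} [TopologicalSpace X] :
    KappaFrechetUrysohn X ↔ ∀ x : X, KappaFrechetUrysohnAt x :=
  ⟨fun h x U hU hx => h U hU x hx, fun h U hU x hx => h x U hU hx⟩

namespace KappaFrechetUrysohnAt

variable {X Z : Type*} [TopologicalSpace X] [TopologicalSpace Z]

theorem homeomorph {x : X} (hx : KappaFrechetUrysohnAt x) (e : X ≃ₜ Z) :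
    KappaFrechetUrysohnAt (e x) := by
  intro U hU hxU
  have hx' : x ∈ closure (e ⁻¹' U) := by rwa [← e.preimage_closure]
  obtain ⟨u, huU, hu⟩ := hx (e ⁻¹' U) (hU.preimage e.continuous) hx'
  exact ⟨e ∘ u, huU, (e.continuous.tendsto x).comp hu⟩

theorem coe_of_dense {Y : Set X} (hY : Dense Y) {y : Y} (hy : KappaFrechetUrysohnAt y) :
    KappaFrechetUrysohnAt (y : X) := by
  intro U hU hyU
  have hyUY : (y : X) ∈ closure (U ∩ Y) :=
    closure_minimal (hY.open_subset_closure_inter hU) isClosed_closure hyU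
  have hy' : y ∈ closure (Subtype.val ⁻¹' U : Set Y) := by
    rwa [closure_subtype, Subtype.image_preimage_coe, Set.inter_comm]
  obtain ⟨u, huU, hu⟩ := hy _ (hU.preimage continuous_subtype_val) hy'
  exact ⟨fun n => u n, huU, (continuous_subtype_val.tendsto y).comp hu⟩

end KappaFrechetUrysohnAt

theorem stmt2 {X : Type*} [TopologicalSpace X]
    (hhom : ∀ x y : X, ∃ h : X ≃ₜ X, h x = y)
    (Y : Set X) (hY : Dense Y) (h : KappaFrechetUrysohn ↥Y) :
    KappaFrechetUrysohn X := by
  rw [kappaFrechetUrysohn_iff_forall_kappaFrechetUrysohnAt] at h ⊢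
  intro x
  obtain ⟨y, hy⟩ := hY.nonempty_iff.2 ⟨x⟩
  obtain ⟨e, rfl⟩ := hhom y x
  exact ((h ⟨y, hy⟩).coe_of_dense hY).homeomorph e
end

section
/- Let {X_i : i ∈ I} be a family of topological spaces such that for every countable subset I' ⊆ I the product ∏_{i∈I'} X_i is Fréchet–Urysohn. Then the full product X = ∏_{i∈I} X_i is κ-Fréchet–Urysohn. -/
/-! Since `U` is open and the points differing from `x` in finitely many coordinates are dense,
`x` is in the closure of `B`, the points of `U` differing from `x` in countably many coordinates.
Closing off: starting from `S₀ = ∅`, let `Sₖ₊₁` be `Sₖ` together with the coordinates where the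
terms of a sequence in `B` converging to `x` on `Sₖ` (Fréchet–Urysohn property of `∏_{Sₖ}`) differ
from `x`. For `S = ⋃ Sₖ`, `x` is in the closure of the points of `B` that agree with `x` off `S`,
and the Fréchet–Urysohn property of `∏_S` gives a sequence among them converging to `x`. -/

open Filter Topology

section

open Set

variable {I : Type*} {X : I → Type*} [∀ i, TopologicalSpace (X i)]

theorem dense_setOf_finite_ne (x : ∀ i, X i) :
    Dense {a : ∀ i, X i | {i | a i ≠ x i}.Finite} := by
  classical
  refine dense_iff_inter_open.2 fun V hV ⟨y, hy⟩ => ?_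
  obtain ⟨F, u, hu, hbox⟩ := isOpen_pi_iff.mp hV y hy
  refine ⟨F.piecewise y x, hbox fun i hi => ?_, F.finite_toSet.subset fun i hi => ?_⟩
  · rw [Finset.piecewise_eq_of_mem _ _ _ hi]
    exact (hu i hi).2
  · by_contra hiF
    exact hi (Finset.piecewise_eq_of_notMem _ _ _ hiF)

theorem exists_seq_mem_forall_tendsto_apply (S : Set I) [FrechetUrysohnSpace (∀ i : S, X i)]
    {B : Set (∀ i, X i)} {x : ∀ i, X i} (hx : x ∈ closure B) :
    ∃ a : ℕ → ∀ i, X i, (∀ n, a n ∈ B) ∧ ∀ i ∈ S, Tendsto (a · i) atTop (𝓝 (x i)) := by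
  let p : (∀ i, X i) → ∀ i : S, X i := fun a i => a i
  have hp : Continuous p := continuous_pi fun i => continuous_apply (i : I)
  obtain ⟨v, hv, hlim⟩ := mem_closure_iff_seq_limit.mp
    (image_closure_subset_closure_image hp (mem_image_of_mem p hx))
  choose a haB hpa using hv
  refine ⟨a, haB, fun i hi => ?_⟩
  simpa [p, ← hpa] using tendsto_pi_nhds.1 hlim ⟨i, hi⟩

theorem mem_closure_inter_pi_compl_of_monotone {B : Set (∀ i, X i)} {x : ∀ i, X i}
    {T : ℕ → Set I} (hT : Monotone T) (a : ℕ → ℕ → ∀ i, X i) (haB : ∀ k n, a k n ∈ B)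
    (hlim : ∀ k, ∀ i ∈ T k, Tendsto (a k · i) atTop (𝓝 (x i)))
    (hoff : ∀ k n, ∀ i ∉ ⋃ k, T k, a k n i = x i) :
    x ∈ closure (B ∩ (⋃ k, T k)ᶜ.pi fun i => {x i}) := by
  classical
  refine mem_closure_iff.2 fun V hV hxV => ?_
  obtain ⟨F, u, hu, hbox⟩ := isOpen_pi_iff.mp hV x hxV
  have hF : ∃ k, ∀ i ∈ F, i ∈ ⋃ k, T k → i ∈ T k := by
    choose! g hg using fun i (hi : i ∈ ⋃ k, T k) => mem_iUnion.1 hi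
    exact ⟨F.sup g, fun i hiF hi => hT (F.le_sup hiF) (hg i hi)⟩
  obtain ⟨k, hk⟩ := hF
  have hev : ∀ᶠ n in atTop, ∀ i ∈ F, i ∈ ⋃ k, T k → a k n i ∈ u i := by
    refine (eventually_all_finset F).2 fun i hiF => ?_
    by_cases hi : i ∈ ⋃ k, T k
    · filter_upwards [hlim k i (hk i hiF hi) ((hu i hiF).1.mem_nhds (hu i hiF).2)]
        with n hn using fun _ => hn
    · exact .of_forall fun _ h => absurd h hi
  obtain ⟨n, hn⟩ := hev.exists
  refine ⟨a k n, hbox fun i hiF => ?_, haB k n, fun i hi => hoff k n i hi⟩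
  by_cases hi : i ∈ ⋃ k, T k
  · exact hn i hiF hi
  · rw [hoff k n i hi]
    exact (hu i hiF).2

theorem exists_countable_mem_closure_inter_pi_compl
    (h : ∀ S : Set I, S.Countable → FrechetUrysohnSpace (∀ i : S, X i))
    {B : Set (∀ i, X i)} {x : ∀ i, X i} (hB : ∀ b ∈ B, {i | b i ≠ x i}.Countable)
    (hx : x ∈ closure B) :
    ∃ S : Set I, S.Countable ∧ x ∈ closure (B ∩ Sᶜ.pi fun i => {x i}) := by
  have hseq (S : Set I) : ∃ a : ℕ → ∀ i, X i, (∀ n, a n ∈ B) ∧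
      (S.Countable → ∀ i ∈ S, Tendsto (a · i) atTop (𝓝 (x i))) := by
    by_cases hS : S.Countable
    · have := h S hS
      obtain ⟨a, haB, hlim⟩ := exists_seq_mem_forall_tendsto_apply S hx
      exact ⟨a, haB, fun _ => hlim⟩
    · obtain ⟨b, hb⟩ := (mem_closure_iff.1 hx) univ isOpen_univ trivial
      exact ⟨fun _ => b, fun _ => hb.2, fun hS' => absurd hS' hS⟩
  choose a haB hlim using hseq
  let step (S : Set I) : Set I := S ∪ ⋃ n, {i | a S n i ≠ x i}
  let T (k : ℕ) : Set I := step^[k] ∅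
  have hT_succ (k : ℕ) : T (k + 1) = step (T k) := Function.iterate_succ_apply' step k ∅
  have hT_countable (k : ℕ) : (T k).Countable := by
    induction k with
    | zero => exact countable_empty
    | succ k ih => rw [hT_succ]; exact ih.union (countable_iUnion fun n => hB _ (haB _ n))
  have hT_mono : Monotone T :=
    monotone_nat_of_le_succ fun k => hT_succ k ▸ subset_union_left
  refine ⟨⋃ k, T k, countable_iUnion hT_countable,
    mem_closure_inter_pi_compl_of_monotone hT_mono (fun k => a (T k)) (fun k => haB _)
      (fun k => hlim _ (hT_countable k)) fun k n i hi => ?_⟩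
  by_contra hne
  exact hi (mem_iUnion.2 ⟨k + 1, hT_succ k ▸ Or.inr (mem_iUnion.2 ⟨n, hne⟩)⟩)

end

theorem stmt3 {I : Type*} {X : I → Type*} [∀ i, TopologicalSpace (X i)]
    (h : ∀ S : Set I, S.Countable → FrechetUrysohnSpace (∀ i : S, X i)) :
    KappaFrechetUrysohn (∀ i, X i) := by
  intro U hU x hx
  let σx : Set (∀ i, X i) := {a | {i | a i ≠ x i}.Countable}
  have hσx : Dense σx := (dense_setOf_finite_ne x).mono fun _ => Set.Finite.countable
  have hxB : x ∈ closure (U ∩ σx) :=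
    closure_minimal (hσx.open_subset_closure_inter hU) isClosed_closure hx
  obtain ⟨S, hS, hxS⟩ := exists_countable_mem_closure_inter_pi_compl h (fun b hb => hb.2) hxB
  have := h S hS
  obtain ⟨b, hb, hlim⟩ := exists_seq_mem_forall_tendsto_apply S hxS
  refine ⟨b, fun n => (hb n).1.1, tendsto_pi_nhds.2 fun i => ?_⟩
  by_cases hi : i ∈ S
  · exact hlim i hi
  · exact tendsto_const_nhds.congr fun n => ((hb n).2 i hi).symm
end

section
/- Let G be a nontrivial metrizable topological group with identity e, κ a cardinal (index set), and H a subgroup of the product G^κ containing the direct sum ⊕_κ G = {f ∈ G^κ : f(i) ≠ e for only finitely many i}. Then H is a κ-Fréchet–Urysohn space. -/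
open Filter Topology

/- The σ-product `Σ(x)` of all points differing from `x` in finitely many coordinates is dense,
and it is Fréchet–Urysohn at `x` when the factors are first countable: pick the `n`-th term close
to `x` (at level `n`) on the finite set of coordinates where some earlier term differs from `x`;
then each coordinate either enters that set and converges, or stays equal to `x i` forever.
A subgroup `H ⊇ Σ(1)` contains `Σ(x)` for each `x ∈ H`, so if `x` is in the closure of
`U = W ∩ H` with `W` open, it is in the closure of `W ∩ Σ(x) ⊆ U`. -/

section SigmaProduct

variable {ι : Type*} {X : ι → Type*}

def sigmaProduct (x : ∀ i, X i) : Set (∀ i, X i) :=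
  {f | {i | f i ≠ x i}.Finite}

variable [∀ i, TopologicalSpace (X i)]

theorem dense_sigmaProduct (x : ∀ i, X i) : Dense (sigmaProduct x) := by
  classical
  refine fun f => mem_closure_iff_nhds.2 fun s hs => ?_
  rw [nhds_pi, Filter.mem_pi] at hs
  obtain ⟨I, hI, t, ht, hts⟩ := hs
  refine ⟨I.piecewise f x, hts fun i hi => ?_, hI.subset fun i hi => ?_⟩
  · rw [Set.piecewise_eq_of_mem _ _ _ hi]
    exact mem_of_mem_nhds (ht i)
  · by_contra hiI
    exact hi (Set.piecewise_eq_of_notMem _ _ _ hiI)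

theorem exists_seq_tendsto_of_subset_sigmaProduct [∀ i, FirstCountableTopology (X i)]
    {x : ∀ i, X i} {S : Set (∀ i, X i)} (hS : S ⊆ sigmaProduct x) (hx : x ∈ closure S) :
    ∃ u : ℕ → ∀ i, X i, (∀ n, u n ∈ S) ∧ Tendsto u atTop (𝓝 x) := by
  classical
  choose B hB using fun i => (𝓝 (x i)).exists_antitone_basis
  have hpick : ∀ (n : ℕ) (F : Finset ι), ∃ f ∈ S, ∀ i ∈ F, f i ∈ B i n := fun n F =>
    (mem_closure_iff_nhds.1 hx _ (set_pi_mem_nhds F.finite_toSet fun i _ => (hB i).mem n)).imp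
      fun _ hf => ⟨hf.2, hf.1⟩
  choose pick hpickS hpickB using hpick
  let F : ℕ → Finset ι := fun n =>
    Nat.rec (motive := fun _ => Finset ι) ∅ (fun n F => F ∪ (hS (hpickS n F)).toFinset) n
  have hF_succ : ∀ n, F (n + 1) = F n ∪ (hS (hpickS n (F n))).toFinset := fun _ => rfl
  have hF_mono : Monotone F :=
    monotone_nat_of_le_succ fun n => (hF_succ n).symm ▸ Finset.subset_union_left
  refine ⟨fun n => pick n (F n), fun n => hpickS n (F n), tendsto_pi_nhds.2 fun i => ?_⟩
  by_cases h : ∃ m, i ∈ F m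
  · obtain ⟨m, hm⟩ := h
    refine (hB i).tendsto_right_iff.2 fun k _ => ?_
    filter_upwards [eventually_ge_atTop (max m k)] with n hn
    exact (hB i).antitone (le_of_max_le_right hn)
      (hpickB n (F n) i (hF_mono (le_of_max_le_left hn) hm))
  · push Not at h
    refine tendsto_const_nhds.congr fun n => ?_
    by_contra hne
    refine h (n + 1) ?_
    rw [hF_succ]
    exact Finset.mem_union_right _ ((Set.Finite.mem_toFinset _).2 (Ne.symm hne))

end SigmaProduct

theorem sigmaProduct_subset_of_mem {ι G : Type*} [Group G] {H : Subgroup (ι → G)}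
    (hH : sigmaProduct 1 ⊆ (H : Set (ι → G))) {x : ι → G} (hx : x ∈ H) :
    sigmaProduct x ⊆ (H : Set (ι → G)) := fun f hf => by
  have hxf : x⁻¹ * f ∈ sigmaProduct 1 := by
    simpa [sigmaProduct, inv_mul_eq_one, eq_comm] using hf
  simpa using H.mul_mem hx (hH hxf)

theorem stmt5_general {G : Type*} [Group G] [TopologicalSpace G]
    [TopologicalSpace.MetrizableSpace G] {κ : Type*}
    (H : Subgroup (κ → G))
    (hH : {f : κ → G | {i | f i ≠ 1}.Finite} ⊆ (H : Set (κ → G))) :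
    KappaFrechetUrysohn ↥H := by
  intro U hU x hx
  obtain ⟨W, hW, rfl⟩ := isOpen_induced_iff.mp hU
  have hxW : (x : κ → G) ∈ closure (W ∩ sigmaProduct x) := by
    refine closure_minimal ((dense_sigmaProduct _).open_subset_closure_inter hW) isClosed_closure ?_
    exact closure_mono (Set.image_preimage_subset _ _) (closure_subtype.1 hx)
  obtain ⟨u, huW, hu⟩ := exists_seq_tendsto_of_subset_sigmaProduct Set.inter_subset_right hxW
  exact ⟨fun n => ⟨u n, sigmaProduct_subset_of_mem hH x.2 (huW n).2⟩, fun n => (huW n).1,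
    tendsto_subtype_rng.2 hu⟩

theorem stmt5 {G : Type*} [Group G] [TopologicalSpace G] [IsTopologicalGroup G]
    [TopologicalSpace.MetrizableSpace G] [Nontrivial G] {κ : Type*}
    (H : Subgroup (κ → G))
    (hH : {f : κ → G | {i | f i ≠ 1}.Finite} ⊆ (H : Set (κ → G))) :
    KappaFrechetUrysohn ↥H :=
  stmt5_general H hH
end

section
/- Every κ-Fréchet–Urysohn Tychonoff space X is an Ascoli space; that is, every compact subset of C_k(X) (the space of continuous real-valued functions with the compact-open topology) is equicontinuous. -/
/-!
For a compact `K ⊆ C_k(X)` and a sequence `u n → x`, evaluation is jointly continuous on the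
compact set `{x} ∪ range u`, so `g (u n) → g x` uniformly in `g ∈ K`. If `K` were not
equicontinuous at `x`, the open set of points `y` with `ε / 2 < |g y - g x|` for some `g ∈ K`
would have `x` in its closure; the κ-Fréchet–Urysohn property yields a sequence in it
converging to `x`, contradicting the uniform convergence.
-/

open Filter Topology

section

variable {X Y : Type*} [TopologicalSpace X]

theorem KappaFrechetUrysohn.equicontinuousAt {ι : Type*} [PseudoMetricSpace Y]
    (h : KappaFrechetUrysohn X) {F : ι → X → Y} (hF : ∀ i, Continuous (F i)) {x : X}
    (hseq : ∀ u : ℕ → X, Tendsto u atTop (𝓝 x) →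
      TendstoUniformly (fun n i => F i (u n)) (fun i => F i x) atTop) :
    EquicontinuousAt F x := by
  rw [Metric.equicontinuousAt_iff_right]
  intro ε hε
  by_contra hbad
  set U : Set X := ⋃ i, {y | ε / 2 < dist (F i x) (F i y)}
  have hU : IsOpen U :=
    isOpen_iUnion fun i => isOpen_lt continuous_const (continuous_const.dist (hF i))
  have hxU : x ∈ closure U := by
    refine mem_closure_iff_frequently.2 ((not_eventually.1 hbad).mono fun y hy => ?_)
    simp only [not_forall, not_lt] at hy
    obtain ⟨i, hi⟩ := hy
    exact Set.mem_iUnion.2 ⟨i, half_lt_self hε |>.trans_le hi⟩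
  obtain ⟨u, huU, hu⟩ := h U hU x hxU
  obtain ⟨n, hn⟩ := (Metric.tendstoUniformly_iff.1 (hseq u hu) (ε / 2) (half_pos hε)).exists
  obtain ⟨i, hi⟩ := Set.mem_iUnion.1 (huU n)
  exact (hn i).not_gt hi

variable [UniformSpace Y]

theorem ContinuousMap.tendsto_apply_seq_prod_nhds {u : ℕ → X} {x : X}
    (hu : Tendsto u atTop (𝓝 x)) (f : C(X, Y)) :
    Tendsto (fun p : ℕ × C(X, Y) => p.2 (u p.1)) (atTop ×ˢ 𝓝 f) (𝓝 (f x)) := by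
  set L := insert x (Set.range u)
  have : CompactSpace L := isCompact_iff_compactSpace.1 hu.isCompact_insert_range
  have huL : Tendsto (fun n => (⟨u n, Set.mem_insert_of_mem _ ⟨n, rfl⟩⟩ : L)) atTop
      (𝓝 ⟨x, Set.mem_insert _ _⟩) := tendsto_subtype_rng.2 hu
  have hres : Tendsto (fun g : C(X, Y) => g.restrict L) (𝓝 f) (𝓝 (f.restrict L)) :=
    (ContinuousMap.continuous_restrict L).tendsto f
  exact continuous_eval.continuousAt.tendsto.comp
    ((hres.comp tendsto_snd).prodMk_nhds (huL.comp tendsto_fst))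

theorem IsCompact.tendstoUniformlyOn_apply_of_tendsto {K : Set C(X, Y)} (hK : IsCompact K)
    {u : ℕ → X} {x : X} (hu : Tendsto u atTop (𝓝 x)) :
    TendstoUniformlyOn (fun n (g : C(X, Y)) => g (u n)) (fun g => g x) atTop K := by
  refine (tendstoLocallyUniformlyOn_iff_tendstoUniformlyOn_of_compact hK).1 ?_
  refine tendstoLocallyUniformlyOn_iff_forall_tendsto.2 fun f _ => ?_
  have hx : Tendsto (fun p : ℕ × C(X, Y) => p.2 x) (atTop ×ˢ 𝓝 f) (𝓝 (f x)) :=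
    ((continuous_eval_const x).tendsto f).comp tendsto_snd
  exact ((hx.prodMk_nhds (ContinuousMap.tendsto_apply_seq_prod_nhds hu f)).mono_left
    (prod_mono_right _ nhdsWithin_le_nhds)).trans (nhds_le_uniformity (f x))

end

theorem stmt6_general {X : Type*} [TopologicalSpace X]
    (h : KappaFrechetUrysohn X) (K : Set C(X, ℝ)) (hK : IsCompact K) :
    ∀ x : X, ∀ ε > (0 : ℝ), ∃ V ∈ 𝓝 x, ∀ y ∈ V, ∀ f ∈ K, |f y - f x| < ε := by
  intro x ε hε
  have hequi : EquicontinuousAt (fun g : K => (g : X → ℝ)) x :=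
    h.equicontinuousAt (fun g => g.1.continuous) fun _ hu =>
      tendstoUniformlyOn_iff_tendstoUniformly_comp_coe.1
        (hK.tendstoUniformlyOn_apply_of_tendsto hu)
  refine ⟨_, Metric.equicontinuousAt_iff_right.1 hequi ε hε, fun y hy f hf => ?_⟩
  simpa [Real.dist_eq, abs_sub_comm] using hy ⟨f, hf⟩

/-- Every κ-Fréchet–Urysohn Tychonoff space is Ascoli: every compact subset of
`C_k(X)` (continuous real-valued functions with the compact-open topology) is
equicontinuous. -/
theorem stmt6 {X : Type*} [TopologicalSpace X] [CompletelyRegularSpace X] [T2Space X]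
    (h : KappaFrechetUrysohn X) (K : Set C(X, ℝ)) (hK : IsCompact K) :
    ∀ x : X, ∀ ε > (0 : ℝ), ∃ V ∈ 𝓝 x, ∀ y ∈ V, ∀ f ∈ K, |f y - f x| < ε :=
  stmt6_general h K hK
end

section
/- The space φ = ⊕_{n∈ℕ} ℝ of finitely supported real sequences, endowed with the finest locally convex topology (whose neighborhood base at 0 consists of the sets {f ∈ φ : |f(n)| < ε_n for all n}, for arbitrary positive sequences (ε_n)), is not κ-Fréchet–Urysohn: there is an open set U ⊆ φ with 0 ∈ cl(U) \ U such that no sequence in U converges to 0. -/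
open Filter Topology

/-- The box topology on `ℕ → ℝ`, generated by all boxes `∏ₙ oₙ` with each `oₙ` open. -/
def boxTopology : TopologicalSpace (ℕ → ℝ) :=
  TopologicalSpace.generateFrom
    {S | ∃ o : ℕ → Set ℝ, (∀ n, IsOpen (o n)) ∧ S = Set.pi Set.univ o}

/-- The space `φ` of finitely supported real sequences, with the topology induced by the
box topology; its neighborhood base at `0` consists of the sets
`{f ∈ φ : |f n| < ε n for all n}` with `ε n > 0`. -/
def Phi : Type := {f : ℕ → ℝ // (Function.support f).Finite}

instance : TopologicalSpace Phi := boxTopology.induced Subtype.val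

instance : Zero Phi := ⟨⟨0, by simp⟩⟩

/-!
Take `U = {f | f n ≠ 0 and 1 / (n + 1) < f 0 for some n}`. It is open and misses `0`, yet every
box around `0` meets it: put a small value at `0` and a nonzero value at a coordinate `n` far
enough out. On the other hand, the supports of a sequence converging to `0` all lie in one finite
set: otherwise, pick for each coordinate `m` of the union a term of the sequence with
`f m ≠ 0` and shrink the box at `m` below `|f m|`; only finitely many terms precede the point
from which the sequence stays in that box. So a sequence in `U` has its witnesses `n` bounded by
some `M`, and its `0`-th coordinates stay above `1 / (M + 1)`.
-/

open Set

namespace boxTopology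

lemma isOpen_pi {o : ℕ → Set ℝ} (ho : ∀ n, IsOpen (o n)) : IsOpen[boxTopology] (univ.pi o) :=
  TopologicalSpace.GenerateOpen.basic _ ⟨o, ho, rfl⟩

lemma isTopologicalBasis :
    @TopologicalSpace.IsTopologicalBasis _ boxTopology
      {S | ∃ o : ℕ → Set ℝ, (∀ n, IsOpen (o n)) ∧ S = univ.pi o} := by
  let _ : TopologicalSpace (ℕ → ℝ) := boxTopology
  refine ⟨?_, ?_, rfl⟩
  · rintro _ ⟨o, ho, rfl⟩ _ ⟨o', ho', rfl⟩ g hg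
    refine ⟨_, ⟨fun n => o n ∩ o' n, fun n => (ho n).inter (ho' n), rfl⟩, ?_, ?_⟩ <;>
      rw [pi_inter_distrib]
    exact hg
  · exact sUnion_eq_univ_iff.2 fun _ =>
      ⟨univ, ⟨fun _ => univ, fun _ => isOpen_univ, pi_univ _ |>.symm⟩, trivial⟩

lemma hasBasis_nhds (g : ℕ → ℝ) :
    (@nhds _ boxTopology g).HasBasis (fun ε : ℕ → ℝ => ∀ n, 0 < ε n)
      fun ε => univ.pi fun n => Metric.ball (g n) (ε n) := by
  let _ : TopologicalSpace (ℕ → ℝ) := boxTopology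
  refine isTopologicalBasis.nhds_hasBasis.to_hasBasis' ?_ ?_
  · rintro _ ⟨⟨o, ho, rfl⟩, hg⟩
    choose ε hε hball using fun n => Metric.isOpen_iff.1 (ho n) (g n) (hg n trivial)
    exact ⟨ε, hε, pi_mono fun n _ => hball n⟩
  · intro ε hε
    exact IsOpen.mem_nhds (isOpen_pi fun n => Metric.isOpen_ball)
      fun n _ => Metric.mem_ball_self (hε n)

lemma continuous_eval (m : ℕ) : Continuous[boxTopology, _] (Function.eval m) := by
  let _ : TopologicalSpace (ℕ → ℝ) := boxTopology
  classical
  refine continuous_def.2 fun s hs => ?_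
  rw [← univ_pi_update_univ]
  refine isOpen_pi fun n => ?_
  rcases eq_or_ne n m with rfl | hnm
  · simpa using hs
  · simp [hnm]

end boxTopology

namespace Phi

lemma hasBasis_nhds_zero :
    (𝓝 (0 : Phi)).HasBasis (fun ε : ℕ → ℝ => ∀ n, 0 < ε n) fun ε => {f | ∀ n, |f.1 n| < ε n} := by
  let _ : TopologicalSpace (ℕ → ℝ) := boxTopology
  have h := (boxTopology.hasBasis_nhds 0).comap (Subtype.val : Phi → ℕ → ℝ)
  simp only [preimage, Set.mem_pi, mem_univ, Pi.zero_apply, Metric.mem_ball, Real.dist_eq,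
    sub_zero, forall_const] at h
  rw [nhds_induced]
  exact h

lemma continuous_apply (m : ℕ) : Continuous fun f : Phi => f.1 m :=
  let _ : TopologicalSpace (ℕ → ℝ) := boxTopology
  (boxTopology.continuous_eval m).comp continuous_induced_dom

lemma finite_iUnion_support_of_tendsto_zero {u : ℕ → Phi} (hu : Tendsto u atTop (𝓝 0)) :
    (⋃ k, Function.support (u k).1).Finite := by
  classical
  set S := ⋃ k, Function.support (u k).1
  have hS : ∀ m ∈ S, ∃ k, (u k).1 m ≠ 0 := fun m hm => mem_iUnion.1 hm
  choose! c hc using hS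
  set ε : ℕ → ℝ := fun m => if m ∈ S then |(u (c m)).1 m| else 1
  have hε : ∀ m, 0 < ε m := fun m => by
    by_cases hm : m ∈ S
    · simpa [ε, hm] using hc m hm
    · simp [ε, hm]
  obtain ⟨K, hK⟩ := eventually_atTop.1 (hasBasis_nhds_zero.tendsto_right_iff.1 hu ε hε)
  have hcK : ∀ m ∈ S, c m < K := fun m hm => by
    by_contra! hle
    simpa [ε, hm] using hK (c m) hle m
  refine ((finite_lt_nat K).biUnion fun k _ => (u k).2).subset fun m hm => ?_
  exact mem_biUnion (hcK m hm) (hc m hm)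

def farReachingSet : Set Phi := {f | ∃ n : ℕ, f.1 n ≠ 0 ∧ 1 / ((n : ℝ) + 1) < f.1 0}

lemma isOpen_farReachingSet : IsOpen farReachingSet := by
  simp only [farReachingSet, ofPred_exists]
  exact isOpen_iUnion fun n => (isOpen_ne_fun (continuous_apply n) continuous_const).inter
    (isOpen_lt continuous_const (continuous_apply 0))

lemma zero_notMem_farReachingSet : (0 : Phi) ∉ farReachingSet :=
  fun ⟨_, hn, _⟩ => hn rfl

lemma zero_mem_closure_farReachingSet : (0 : Phi) ∈ closure farReachingSet := by
  refine (mem_closure_iff_nhds_basis hasBasis_nhds_zero).2 fun ε hε => ?_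
  obtain ⟨N, hN⟩ := exists_nat_one_div_lt (hε 0)
  have hN0 : N + 1 ≠ 0 := N.succ_ne_zero
  let f : Phi := ⟨Pi.single 0 (1 / ((N : ℝ) + 1)) + Pi.single (N + 1) (ε (N + 1) / 2),
    ((finite_singleton 0).union (finite_singleton (N + 1))).subset <|
      (Function.support_add _ _).trans <|
        union_subset_union Pi.support_single_subset Pi.support_single_subset⟩
  refine ⟨f, ⟨N + 1, ?_, ?_⟩, fun m => ?_⟩
  · simpa [f, hN0] using (hε (N + 1)).ne'
  · have : 1 / (((N + 1 : ℕ) : ℝ) + 1) < 1 / ((N : ℝ) + 1) :=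
      one_div_lt_one_div_of_lt (by positivity) (by push_cast; linarith)
    simpa [f, hN0.symm] using this
  · rcases eq_or_ne m 0 with rfl | hm
    · simpa [f, hN0.symm, abs_of_pos (by positivity : (0 : ℝ) < N + 1)] using hN
    rcases eq_or_ne m (N + 1) with rfl | hmN
    · simpa [f, hm, abs_of_pos (half_pos (hε (N + 1)))] using half_lt_self (hε (N + 1))
    · simpa [f, hm, hmN] using hε m

lemma not_tendsto_zero_of_forall_mem_farReachingSet {u : ℕ → Phi}
    (hu : ∀ k, u k ∈ farReachingSet) : ¬ Tendsto u atTop (𝓝 0) := by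
  intro hlim
  choose n hn hn0 using hu
  obtain ⟨M, hM⟩ := (finite_iUnion_support_of_tendsto_zero hlim).bddAbove
  have hnM : ∀ k, n k ≤ M := fun k => hM (mem_iUnion.2 ⟨k, hn k⟩)
  have hlim0 : Tendsto (fun k => (u k).1 0) atTop (𝓝 0) :=
    ((continuous_apply 0).tendsto 0).comp hlim
  obtain ⟨k, hk⟩ := (hlim0.eventually_lt_const (Nat.one_div_pos_of_nat (n := M))).exists
  have : 1 / ((M : ℝ) + 1) ≤ 1 / ((n k : ℝ) + 1) :=
    one_div_le_one_div_of_le (by positivity) (by exact_mod_cast Nat.add_le_add_right (hnM k) 1)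
  linarith [hn0 k]

end Phi

/-- `φ` is not κ-Fréchet–Urysohn: there is an open set `U` with `0 ∈ cl U \ U`
such that no sequence in `U` converges to `0`. -/
theorem stmt7 :
    ∃ U : Set Phi, IsOpen U ∧ (0 : Phi) ∈ closure U \ U ∧
      ∀ u : ℕ → Phi, (∀ n, u n ∈ U) → ¬ Tendsto u atTop (𝓝 (0 : Phi)) :=
  ⟨Phi.farReachingSet, Phi.isOpen_farReachingSet,
    ⟨Phi.zero_mem_closure_farReachingSet, Phi.zero_notMem_farReachingSet⟩,
    fun _ => Phi.not_tendsto_zero_of_forall_mem_farReachingSet⟩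
end

section
/- In the space φ of finitely supported real sequences with the box-type topology (base at 0: sets {f : |f(n)| < ε_n for all n} with ε_n > 0), define U_{n,k} = {f ∈ φ : |f(1)| > 1/(2n) and |f(n)| > 1/(2k)} and U = ⋃_{n,k∈ℕ} U_{n,k}. Then 0 belongs to the closure of U but no sequence contained in U converges to 0. -/
open Filter Topology

/-- The set `Uₙₖ = {f ∈ φ : |f 1| > 1/(2n) and |f n| > 1/(2k)}` for `n, k ≥ 1`. -/
def Unk (n k : ℕ) : Set Phi :=
  {f : Phi | |f.1 1| > 1 / (2 * (n : ℝ)) ∧ |f.1 n| > 1 / (2 * (k : ℝ))}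

/-! A box neighbourhood of `0` with radii `ε` meets `Uₙₖ` as soon as `1/n < ε 1` and `1/k < ε n`,
witnessed by a sequence supported on `{1, n}`.

Conversely, let `u j ∈ U_{N j, K j}` and suppose `u → 0`. Coordinate `1` forces every fibre
`{j | N j = m}` to be finite, since `|u j 1| > 1/(2m)` on it. Radii `ε m` below the minimum of
`|u j m|` over that finite fibre then give a box neighbourhood of `0` containing no `u j` at all. -/

lemma boxTopology_isTopologicalBasis :
    @TopologicalSpace.IsTopologicalBasis (ℕ → ℝ) boxTopology
      {S | ∃ o : ℕ → Set ℝ, (∀ n, IsOpen (o n)) ∧ S = Set.pi Set.univ o} := by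
  refine @TopologicalSpace.isTopologicalBasis_of_subbasis_of_finiteInter _ boxTopology _ rfl
    ⟨⟨fun _ => Set.univ, fun _ => isOpen_univ, Set.pi_univ _ |>.symm⟩, ?_⟩
  rintro _ ⟨o, ho, rfl⟩ _ ⟨o', ho', rfl⟩
  exact ⟨fun n => o n ∩ o' n, fun n => (ho n).inter (ho' n), Set.pi_inter_distrib.symm⟩

lemma boxTopology_nhds_hasBasis (x : ℕ → ℝ) :
    (@nhds _ boxTopology x).HasBasis (fun ε : ℕ → ℝ => ∀ n, 0 < ε n)
      (fun ε => Set.univ.pi fun n => Metric.ball (x n) (ε n)) := by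
  let := boxTopology
  refine boxTopology_isTopologicalBasis.nhds_hasBasis.to_hasBasis ?_ ?_
  · rintro _ ⟨⟨o, ho, rfl⟩, hx⟩
    choose ε hε hball using fun n => Metric.isOpen_iff.1 (ho n) (x n) (hx n trivial)
    exact ⟨ε, hε, Set.pi_mono fun n _ => hball n⟩
  · intro ε hε
    exact ⟨_, ⟨⟨_, fun n => Metric.isOpen_ball, rfl⟩, fun n _ => Metric.mem_ball_self (hε n)⟩,
      subset_rfl⟩

lemma Phi.nhds_zero_hasBasis :
    (𝓝 (0 : Phi)).HasBasis (fun ε : ℕ → ℝ => ∀ n, 0 < ε n)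
      (fun ε => {f : Phi | ∀ n, |f.1 n| < ε n}) := by
  let := boxTopology
  rw [nhds_induced]
  refine ((boxTopology_nhds_hasBasis 0).comap Subtype.val).congr (fun _ => Iff.rfl) ?_
  intro ε _
  ext f
  simp only [Set.mem_preimage, Set.mem_pi, Set.mem_univ, Metric.mem_ball, Pi.zero_apply,
    dist_zero_right, Real.norm_eq_abs, forall_const]
  rfl

lemma Set.Finite.exists_pos_forall_lt {ι : Type*} {s : Set ι} (hs : s.Finite) {g : ι → ℝ}
    (hg : ∀ i ∈ s, 0 < g i) : ∃ ε > 0, ∀ i ∈ s, ε < g i :=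
  ((eventually_mem_nhdsWithin (a := (0 : ℝ)) (s := Set.Ioi 0)).and <|
    (Filter.eventually_all_finite hs).2 fun i hi =>
      nhdsWithin_le_nhds (eventually_lt_nhds (hg i hi))).exists

lemma exists_pos_forall_lt_of_finite_fibers {ι β : Type*} {N : ι → β}
    (hN : ∀ b, {i | N i = b}.Finite) {g : ι → ℝ} (hg : ∀ i, 0 < g i) :
    ∃ ε : β → ℝ, (∀ b, 0 < ε b) ∧ ∀ i, ε (N i) < g i := by
  choose ε hε hεg using fun b => (hN b).exists_pos_forall_lt fun i _ => hg i
  exact ⟨ε, hε, fun i => hεg (N i) i rfl⟩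

lemma Phi.finite_setOf_le_abs_apply {u : ℕ → Phi} (hu : Tendsto u atTop (𝓝 0)) (n : ℕ)
    {δ : ℝ} (hδ : 0 < δ) : {j | δ ≤ |(u j).1 n|}.Finite := by
  have := Phi.nhds_zero_hasBasis.tendsto_right_iff.1 hu (fun _ => δ) fun _ => hδ
  rw [← Nat.cofinite_eq_atTop, Filter.eventually_cofinite] at this
  exact this.subset fun j hj hlt => (hlt n).not_ge hj

lemma exists_nat_ge_one_div_lt (N : ℕ) {a : ℝ} (ha : 0 < a) : ∃ n ≥ N, 1 / (n : ℝ) < a :=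
  ((tendsto_one_div_atTop_nhds_zero_nat.eventually (gt_mem_nhds ha)).and
    (eventually_ge_atTop N)).exists.imp fun _ h => ⟨h.2, h.1⟩

lemma zero_mem_closure_iUnion_Unk : (0 : Phi) ∈ closure (⋃ n ≥ 1, ⋃ k ≥ 1, Unk n k) := by
  rw [mem_closure_iff_nhds_basis Phi.nhds_zero_hasBasis]
  intro ε hε
  obtain ⟨n, hn2, hn⟩ := exists_nat_ge_one_div_lt 2 (hε 1)
  obtain ⟨k, hk1, hk⟩ := exists_nat_ge_one_div_lt 1 (hε n)
  have hn1 : n ≠ 1 := by omega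
  let g : ℕ → ℝ := Pi.single 1 (ε 1 / 2) + Pi.single n (ε n / 2)
  have hg : g.support.Finite := ((Set.finite_singleton 1).union (Set.finite_singleton n)).subset
    ((Function.support_add _ _).trans (Set.union_subset_union Pi.support_single_subset
      Pi.support_single_subset))
  have hg1 : g 1 = ε 1 / 2 := by simp [g, hn1]
  have hgn : g n = ε n / 2 := by simp [g, hn1]
  refine ⟨⟨g, hg⟩, ?_, fun m => ?_⟩
  · refine Set.mem_iUnion₂.2 ⟨n, by omega, Set.mem_iUnion₂.2 ⟨k, hk1, ?_, ?_⟩⟩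
    · change _ < |g 1|
      rw [hg1, abs_of_pos (half_pos (hε 1))]
      linarith [show 1 / (2 * (n : ℝ)) = 1 / n / 2 by ring]
    · change _ < |g n|
      rw [hgn, abs_of_pos (half_pos (hε n))]
      linarith [show 1 / (2 * (k : ℝ)) = 1 / k / 2 by ring]
  · change |g m| < ε m
    by_cases h1 : m = 1
    · subst h1; rw [hg1, abs_of_pos (half_pos (hε 1))]; linarith [hε 1]
    by_cases hmn : m = n
    · subst hmn; rw [hgn, abs_of_pos (half_pos (hε m))]; linarith [hε m]
    simpa [g, h1, hmn] using hε m

lemma not_tendsto_zero_of_forall_mem_iUnion_Unk {u : ℕ → Phi}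
    (hu : ∀ j, u j ∈ ⋃ n ≥ 1, ⋃ k ≥ 1, Unk n k) : ¬ Tendsto u atTop (𝓝 (0 : Phi)) := by
  intro htend
  simp only [Set.mem_iUnion, Unk, Set.mem_ofPred_eq] at hu
  choose N hN K hK hu1 huN using hu
  have hfiber : ∀ m, {j | N j = m}.Finite := by
    intro m
    rcases Nat.eq_zero_or_pos m with rfl | hm
    · simp [Nat.one_le_iff_ne_zero.1 (hN _)]
    · refine (Phi.finite_setOf_le_abs_apply htend 1 (δ := 1 / (2 * m)) (by positivity)).subset ?_
      rintro j rfl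
      exact (hu1 j).le
  have hpos : ∀ j, 0 < |(u j).1 (N j)| := fun j =>
    (one_div_pos.2 (mul_pos two_pos (Nat.cast_pos.2 (hK j)))).trans (huN j)
  obtain ⟨ε, hε, hεu⟩ := exists_pos_forall_lt_of_finite_fibers hfiber hpos
  obtain ⟨j, hj⟩ := (Phi.nhds_zero_hasBasis.tendsto_right_iff.1 htend ε hε).exists
  exact (hj (N j)).not_gt (hεu j)

theorem stmt8 :
    (0 : Phi) ∈ closure (⋃ n ≥ 1, ⋃ k ≥ 1, Unk n k) ∧
      ∀ u : ℕ → Phi, (∀ j, u j ∈ ⋃ n ≥ 1, ⋃ k ≥ 1, Unk n k) →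
        ¬ Tendsto u atTop (𝓝 (0 : Phi)) :=
  ⟨zero_mem_closure_iUnion_Unk, fun _ => not_tendsto_zero_of_forall_mem_iUnion_Unk⟩
end

section
/- Let G be a nontrivial abelian topological group and X = {x_n : n ∈ ℕ} a countable G-Tychonoff first countable space. Then every function X → G is of Baire class one, i.e., B_1(X,G) = G^X. -/
/-!
Since `X` is countable, the finite subsets of `X` are exhausted by a sequence, so it suffices
to interpolate `f` on every finite set by a continuous function. This goes by induction on the
finite set: finite sets are closed, so `G`-Tychonoffness yields a continuous function vanishing
on the old set and correcting the value at the new point, which is added to the old interpolant.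
-/

open Filter Topology

/-- `X` is `G`-Tychonoff: every point outside a closed set can be completely separated
from it by a continuous `G`-valued function taking prescribed (distinct) values. -/
def GTychonoff (X G : Type*) [TopologicalSpace X] [TopologicalSpace G] : Prop :=
  ∀ A : Set X, IsClosed A → ∀ x ∉ A, ∀ y z : G, y ≠ z →
    ∃ f : X → G, Continuous f ∧ f x = y ∧ ∀ a ∈ A, f a = z

theorem GTychonoff.exists_continuous_eqOn_finset {X G : Type*} [TopologicalSpace X]
    [T1Space X] [AddGroup G] [TopologicalSpace G] [ContinuousAdd G] (hXG : GTychonoff X G)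
    (f : X → G) (s : Finset X) : ∃ F : X → G, Continuous F ∧ Set.EqOn F f s := by
  classical
  induction s using Finset.induction_on with
  | empty => exact ⟨0, continuous_const, by simp⟩
  | insert a s ha ih =>
    obtain ⟨F, hF, hFs⟩ := ih
    by_cases hFa : F a = f a
    · refine ⟨F, hF, ?_⟩
      rw [Finset.coe_insert]
      exact Set.forall_insert_of_forall hFs hFa
    have hcorr : -F a + f a ≠ 0 := mt neg_add_eq_zero.mp hFa
    obtain ⟨g, hg, hga, hgs⟩ := hXG s s.finite_toSet.isClosed a ha _ _ hcorr
    refine ⟨F + g, hF.add hg, ?_⟩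
    rw [Finset.coe_insert]
    refine Set.forall_insert_of_forall (fun b hb => ?_) ?_
    · simp [hgs b hb, hFs hb]
    · simp [hga]

theorem exists_seq_tendsto_of_forall_finset_eqOn {X Y : Type*} [TopologicalSpace Y]
    [Countable X] {C : Set (X → Y)} {f : X → Y} (h : ∀ s : Finset X, ∃ F ∈ C, Set.EqOn F f s) :
    ∃ F : ℕ → X → Y, (∀ n, F n ∈ C) ∧ ∀ x, Tendsto (fun n => F n x) atTop (𝓝 (f x)) := by
  choose F hFC hFf using h
  obtain ⟨s, hs⟩ := exists_seq_tendsto (atTop : Filter (Finset X))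
  refine ⟨F ∘ s, fun n => hFC _, fun x => tendsto_nhds_of_eventually_eq ?_⟩
  filter_upwards [hs.eventually (eventually_ge_atTop {x})] with n hn
  exact hFf _ (hn (Finset.mem_singleton_self x))

theorem stmt10_general {G X : Type*} [AddCommGroup G] [TopologicalSpace G] [IsTopologicalAddGroup G]
    [TopologicalSpace X] [T2Space X] [Countable X]
    (hXG : GTychonoff X G) (f : X → G) :
    ∃ F : ℕ → X → G, (∀ n, Continuous (F n)) ∧
      ∀ x, Tendsto (fun n => F n x) atTop (𝓝 (f x)) :=
  exists_seq_tendsto_of_forall_finset_eqOn (C := {F | Continuous F})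
    (hXG.exists_continuous_eqOn_finset f)

/-- If `G` is a nontrivial abelian topological group and `X` is a countable `G`-Tychonoff
first countable space, then `B₁(X, G) = G^X`: every function `X → G` is a pointwise limit
of a sequence of continuous functions. -/
theorem stmt10 {G X : Type*} [AddCommGroup G] [TopologicalSpace G] [IsTopologicalAddGroup G]
    [Nontrivial G] [TopologicalSpace X] [T2Space X] [Countable X]
    [FirstCountableTopology X] (hXG : GTychonoff X G) (f : X → G) :
    ∃ F : ℕ → X → G, (∀ n, Continuous (F n)) ∧
      ∀ x, Tendsto (fun n => F n x) atTop (𝓝 (f x)) :=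
  stmt10_general hXG f
end

section
/- Let G be an absolutely convex subset of a locally convex space E, X a Tychonoff first countable space, {U_n}_{n<N} (1 < N ≤ ∞) a pairwise disjoint family of open subsets of X with points x_n ∈ U_n, and elements g_1, g_2, …, g_N ∈ G. Then the function f defined by f(x_k) = g_k for k < N and f(x) = g_N for x ∉ {x_k : k < N} is a pointwise limit of continuous functions from X to G; in particular f ∈ B_1(X,G). -/
/-!
Enumerate the index set by an exhausting sequence of finite sets `s n`. Around each `x i` choose
`[0, 1]`-valued bumps `ψ i n` equal to `1` at `x i`, vanishing off `U i`, whose supports shrink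
to `x i` (first countability). Then `F n = g' + ∑ i ∈ s n, ψ i n • (g i - g')` is continuous
because the sum is finite; by disjointness of the `U i` at most one summand is nonzero at each
point, so `F n` is a convex combination of `g'` and some `g i`; and at each point `F n` is
eventually equal to `f`.
-/

open Filter Function Topology Set unitInterval

theorem CompletelyRegularSpace.exists_unitInterval_bump {X : Type*} [TopologicalSpace X]
    [CompletelyRegularSpace X] {x : X} {s : Set X} (hs : s ∈ 𝓝 x) :
    ∃ ψ : X → I, Continuous ψ ∧ ψ x = 1 ∧ EqOn ψ 0 sᶜ := by
  obtain ⟨φ, hφ, hφx, hφs⟩ := CompletelyRegularSpace.completely_regular_isOpen x (interior s)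
    isOpen_interior (mem_interior_iff_mem_nhds.2 hs)
  refine ⟨σ ∘ φ, continuous_symm.comp hφ, by simp [hφx], fun y hy => ?_⟩
  simp [hφs fun h => hy (interior_subset h)]

theorem exists_seq_unitInterval_bump_eventually_eq_zero {X : Type*} [TopologicalSpace X]
    [CompletelyRegularSpace X] [T1Space X] [FirstCountableTopology X] {x : X} {s : Set X}
    (hs : s ∈ 𝓝 x) :
    ∃ ψ : ℕ → X → I, (∀ n, Continuous (ψ n)) ∧ (∀ n, ψ n x = 1) ∧ (∀ n, EqOn (ψ n) 0 sᶜ) ∧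
      ∀ y ≠ x, ∀ᶠ n in atTop, ψ n y = 0 := by
  obtain ⟨V, hV⟩ := (𝓝 x).exists_antitone_basis
  choose ψ hψ using fun n =>
    CompletelyRegularSpace.exists_unitInterval_bump (inter_mem hs (hV.mem n))
  refine ⟨ψ, fun n => (hψ n).1, fun n => (hψ n).2.1, fun n y hy => (hψ n).2.2 fun h => hy h.1,
    fun y hy => ?_⟩
  filter_upwards [hV.eventually_subset (compl_singleton_mem_nhds hy.symm)] with n hn
  exact (hψ n).2.2 fun h => hn h.2 rfl

section BumpPatch

variable {X E ι : Type*} [AddCommGroup E] [Module ℝ E]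

def bumpPatch (s : Finset ι) (ψ : ι → X → I) (g : ι → E) (g' : E) (y : X) : E :=
  g' + ∑ i ∈ s, (ψ i y : ℝ) • (g i - g')

variable {U : ι → Set X} {ψ : ι → X → I} (s : Finset ι) (g : ι → E) (g' : E)

theorem bumpPatch_of_mem [DecidableEq ι] (hdisj : Pairwise (Disjoint on U))
    (hψ : ∀ i, EqOn (ψ i) 0 (U i)ᶜ) {i₀ : ι} {y : X} (hy : y ∈ U i₀) :
    bumpPatch s ψ g g' y = g' + (if i₀ ∈ s then (ψ i₀ y : ℝ) else 0) • (g i₀ - g') := by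
  have hterm : ∀ i, (ψ i y : ℝ) • (g i - g') =
      if i = i₀ then (ψ i₀ y : ℝ) • (g i₀ - g') else 0 := by
    intro i
    split_ifs with h
    · rw [h]
    · simp [hψ i fun hi => (hdisj h).ne_of_mem hi hy rfl]
  rw [bumpPatch, Finset.sum_congr rfl fun i _ => hterm i, Finset.sum_ite_eq', ite_smul, zero_smul]

theorem bumpPatch_of_forall_notMem (hψ : ∀ i, EqOn (ψ i) 0 (U i)ᶜ) {y : X}
    (hy : ∀ i, y ∉ U i) : bumpPatch s ψ g g' y = g' := by
  simp [bumpPatch, fun i => hψ i (hy i)]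

theorem continuous_bumpPatch [TopologicalSpace X] [TopologicalSpace E] [ContinuousAdd E]
    [ContinuousSMul ℝ E] (hψ : ∀ i, Continuous (ψ i)) : Continuous (bumpPatch s ψ g g') :=
  continuous_const.add <| continuous_finsetSum _ fun i _ =>
    (continuous_subtype_val.comp (hψ i)).smul continuous_const

theorem bumpPatch_mem {G : Set E} (hG : Convex ℝ G) (hg : ∀ i, g i ∈ G) (hg' : g' ∈ G)
    (hdisj : Pairwise (Disjoint on U)) (hψ : ∀ i, EqOn (ψ i) 0 (U i)ᶜ) (y : X) :
    bumpPatch s ψ g g' y ∈ G := by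
  classical
  by_cases hy : ∃ i, y ∈ U i
  · obtain ⟨i₀, hy⟩ := hy
    rw [bumpPatch_of_mem s g g' hdisj hψ hy]
    refine hG.add_smul_sub_mem hg' (hg i₀) ?_
    split_ifs
    · exact (ψ i₀ y).2
    · exact left_mem_Icc.2 zero_le_one
  · simp only [not_exists] at hy
    rwa [bumpPatch_of_forall_notMem s g g' hψ hy]

theorem eventually_bumpPatch_eq {s : ℕ → Finset ι} (hs : Tendsto s atTop atTop)
    (hdisj : Pairwise (Disjoint on U)) {x : ι → X} (hx : ∀ i, x i ∈ U i)
    {ψ : ι → ℕ → X → I} (hψU : ∀ i n, EqOn (ψ i n) 0 (U i)ᶜ) (hψx : ∀ i n, ψ i n (x i) = 1)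
    (hψ0 : ∀ i, ∀ y ≠ x i, ∀ᶠ n in atTop, ψ i n y = 0)
    {f : X → E} (hf1 : ∀ i, f (x i) = g i) (hf2 : ∀ y, y ∉ range x → f y = g') (y : X) :
    ∀ᶠ n in atTop, bumpPatch (s n) (fun i => ψ i n) g g' y = f y := by
  classical
  by_cases hy : ∃ i, y ∈ U i
  · obtain ⟨i₀, hy⟩ := hy
    simp_rw [bumpPatch_of_mem _ g g' hdisj (fun i => hψU i _) hy]
    by_cases hyx : y = x i₀
    · filter_upwards [hs.eventually_ge_atTop {i₀}] with n hn
      rw [if_pos (hn (Finset.mem_singleton_self i₀)), hyx, hψx, hf1]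
      simp
    · have hyr : y ∉ range x := by
        rintro ⟨j, rfl⟩
        exact hyx (congrArg x (hdisj.eq (not_disjoint_iff.2 ⟨_, hx j, hy⟩)))
      filter_upwards [hψ0 i₀ y hyx] with n hn
      simp [hn, hf2 y hyr]
  · simp only [not_exists] at hy
    have hyr : y ∉ range x := by
      rintro ⟨j, rfl⟩
      exact hy j (hx j)
    exact Eventually.of_forall fun n => by
      rw [bumpPatch_of_forall_notMem _ g g' (fun i => hψU i n) hy, hf2 y hyr]

end BumpPatch

theorem stmt12_general {E : Type*} [AddCommGroup E] [Module ℝ E] [TopologicalSpace E]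
    [IsTopologicalAddGroup E] [ContinuousSMul ℝ E]
    (G : Set E)
    (hG : ∀ g ∈ G, ∀ h ∈ G, ∀ α β : ℝ, |α| + |β| ≤ 1 → α • g + β • h ∈ G)
    {X : Type*} [TopologicalSpace X] [CompletelyRegularSpace X] [T2Space X]
    [FirstCountableTopology X]
    {ι : Type*} [Countable ι]
    (U : ι → Set X) (hUo : ∀ i, IsOpen (U i))
    (hdisj : ∀ i j, i ≠ j → Disjoint (U i) (U j))
    (x : ι → X) (hx : ∀ i, x i ∈ U i)
    (g : ι → E) (hg : ∀ i, g i ∈ G) (g' : E) (hg' : g' ∈ G)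
    (f : X → E) (hf1 : ∀ i, f (x i) = g i)
    (hf2 : ∀ y, y ∉ Set.range x → f y = g') :
    ∃ F : ℕ → X → E, (∀ n, Continuous (F n) ∧ ∀ y, F n y ∈ G) ∧
      ∀ y, Tendsto (fun n => F n y) atTop (𝓝 (f y)) := by
  have hGc : Convex ℝ G := fun a ha b hb α β hα hβ hαβ =>
    hG a ha b hb α β (by rw [abs_of_nonneg hα, abs_of_nonneg hβ, hαβ])
  obtain ⟨s, hs⟩ := exists_seq_tendsto (atTop : Filter (Finset ι))
  choose ψ hψc hψx hψU hψ0 using fun i =>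
    exists_seq_unitInterval_bump_eventually_eq_zero ((hUo i).mem_nhds (hx i))
  refine ⟨fun n => bumpPatch (s n) (fun i => ψ i n) g g',
    fun n => ⟨continuous_bumpPatch _ g g' fun i => hψc i n,
      bumpPatch_mem _ g g' hGc hg hg' hdisj fun i => hψU i n⟩, fun y => ?_⟩
  exact tendsto_const_nhds.congr'
    ((eventually_bumpPatch_eq g g' hs hdisj hx hψU hψx hψ0 hf1 hf2 y).mono fun _ h => h.symm)

/-- Let `G` be an absolutely convex subset of a locally convex space `E`, `X` a Tychonoff
first countable space, `(U i)` a pairwise disjoint family (indexed by a countable type) of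
open sets with `x i ∈ U i`, and `g i, g' ∈ G`. Then the function equal to `g i` at `x i`
and to `g'` elsewhere is a pointwise limit of continuous `G`-valued functions, i.e. it
belongs to `B₁(X, G)`. -/
theorem stmt12 {E : Type*} [AddCommGroup E] [Module ℝ E] [TopologicalSpace E]
    [IsTopologicalAddGroup E] [ContinuousSMul ℝ E] [LocallyConvexSpace ℝ E]
    (G : Set E)
    (hG : ∀ g ∈ G, ∀ h ∈ G, ∀ α β : ℝ, |α| + |β| ≤ 1 → α • g + β • h ∈ G)
    {X : Type*} [TopologicalSpace X] [CompletelyRegularSpace X] [T2Space X]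
    [FirstCountableTopology X]
    {ι : Type*} [Countable ι]
    (U : ι → Set X) (hUo : ∀ i, IsOpen (U i))
    (hdisj : ∀ i j, i ≠ j → Disjoint (U i) (U j))
    (x : ι → X) (hx : ∀ i, x i ∈ U i)
    (g : ι → E) (hg : ∀ i, g i ∈ G) (g' : E) (hg' : g' ∈ G)
    (f : X → E) (hf1 : ∀ i, f (x i) = g i)
    (hf2 : ∀ y, y ∉ Set.range x → f y = g') :
    ∃ F : ℕ → X → E, (∀ n, Continuous (F n) ∧ ∀ y, F n y ∈ G) ∧
      ∀ y, Tendsto (fun n => F n y) atTop (𝓝 (f y)) :=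
  stmt12_general G hG U hUo hdisj x hx g hg g' hg' f hf1 hf2
end

section
/- Let G be a nontrivial abelian metrizable group, X a G-Tychonoff first countable space, and H a subgroup of G^X (with the pointwise topology) containing B_1(X,G). Then H is κ-Fréchet–Urysohn. -/
/-!
Single-point functions are pointwise limits of continuous functions (separate the point from
the closed complements of a shrinking neighbourhood basis), so `H` is stable under changing an
element on finitely many coordinates. If `h ∈ H` lies in the closure of an open `V`, then near a
point of `V` only finitely many coordinates are constrained, and on all others we may copy `h`.
So for every finite `F ⊆ X` and every `n` some element of `V ∩ H` lies in the `n`-th basic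
neighbourhood of `h x` at each `x ∈ F` and agrees with `h` off a finite set. Feeding these
finite sets back into `F` gives a sequence converging to `h` at every coordinate: a point that is
ever modified is controlled from then on, and a point that is never modified never moves.
-/

open Filter Topology

theorem GTychonoff.exists_continuous_tendsto_single {X G : Type*} [TopologicalSpace X]
    [T1Space X] [FirstCountableTopology X] [TopologicalSpace G] [Zero G] [DecidableEq X]
    (hXG : GTychonoff X G) (x₀ : X) (y : G) :
    ∃ F : ℕ → X → G, (∀ n, Continuous (F n)) ∧
      ∀ x, Tendsto (fun n => F n x) atTop (𝓝 ((Pi.single x₀ y : X → G) x)) := by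
  by_cases hy : y = 0
  · subst hy
    exact ⟨fun _ => 0, fun _ => continuous_const, fun x => by simpa using tendsto_const_nhds⟩
  obtain ⟨b, hb⟩ := (𝓝 x₀).exists_antitone_basis
  have hsep : ∀ n, ∃ f : X → G, Continuous f ∧ f x₀ = y ∧
      ∀ a ∈ (interior (b n))ᶜ, f a = 0 :=
    fun n => hXG _ isOpen_interior.isClosed_compl x₀
      (not_not.2 (mem_interior_iff_mem_nhds.2 (hb.mem n))) y 0 hy
  choose f hf_cont hf_x₀ hf_zero using hsep
  refine ⟨f, hf_cont, fun x => ?_⟩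
  rcases eq_or_ne x x₀ with rfl | hx
  · simpa [hf_x₀] using tendsto_const_nhds
  have hx_out : ∀ᶠ n in atTop, b n ⊆ {x}ᶜ :=
    hb.eventually_subset (isOpen_compl_singleton.mem_nhds hx.symm)
  rw [Pi.single_eq_of_ne hx]
  exact tendsto_const_nhds.congr' <| hx_out.mono fun n hn =>
    (hf_zero n x fun hxb => hn (interior_subset hxb) rfl).symm

theorem AddSubgroup.piecewise_mem_of_single_mem {X G : Type*} [AddGroup G] [DecidableEq X]
    {H : AddSubgroup (X → G)} (hH : ∀ x y, Pi.single x y ∈ H) (I : Finset X) (u : X → G)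
    {h : X → G} (hh : h ∈ H) : I.piecewise u h ∈ H := by
  induction I using Finset.induction_on with
  | empty => simpa using hh
  | insert a I _ ih =>
    have hupdate : Function.update (I.piecewise u h) a (u a) =
        I.piecewise u h + Pi.single a (-I.piecewise u h a + u a) := by
      funext x
      rcases eq_or_ne x a with rfl | hx
      · simp
      · simp [hx]
    rw [Finset.piecewise_insert, hupdate]
    exact H.add_mem ih (hH _ _)

theorem exists_finset_forall_piecewise_mem_of_mem_nhds {ι : Type*} {π : ι → Type*}
    [∀ i, TopologicalSpace (π i)] [DecidableEq ι] {g : ∀ i, π i} {V : Set (∀ i, π i)}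
    (hV : V ∈ 𝓝 g) : ∃ I : Finset ι, ∀ h, I.piecewise g h ∈ V := by
  rw [nhds_pi, Filter.mem_pi'] at hV
  obtain ⟨I, t, ht, hsub⟩ := hV
  exact ⟨I, fun h => hsub fun i hi => by
    simpa [Finset.piecewise_eq_of_mem _ _ _ (Finset.mem_coe.1 hi)] using mem_of_mem_nhds (ht i)⟩

theorem exists_seq_tendsto_of_forall_finset_approx {X G : Type*} [TopologicalSpace G]
    [FirstCountableTopology G] {S : Set (X → G)} {f : X → G}
    (hS : ∀ (F : Finset X) (W : X → Set G), (∀ x, W x ∈ 𝓝 (f x)) →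
      ∃ g ∈ S, ∃ I : Finset X, (∀ x ∈ F, g x ∈ W x) ∧ ∀ x ∉ I, g x = f x) :
    ∃ u : ℕ → X → G, (∀ n, u n ∈ S) ∧ Tendsto u atTop (𝓝 f) := by
  classical
  choose b hb using fun x => (𝓝 (f x)).exists_antitone_basis
  choose g hgS I hg_near hg_eq using fun (F : Finset X) (n : ℕ) => hS F (b · n) (hb · |>.mem n)
  -- `F n` collects every coordinate modified before stage `n`.
  let F : ℕ → Finset X := fun n =>
    Nat.rec (motive := fun _ => Finset X) ∅ (fun n s => s ∪ I s n) n
  have hF_mono : Monotone F := monotone_nat_of_le_succ fun n => Finset.subset_union_left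
  refine ⟨fun n => g (F n) n, fun n => hgS _ _, tendsto_pi_nhds.2 fun x => ?_⟩
  by_cases hx : ∃ k, x ∈ F k
  · obtain ⟨k, hk⟩ := hx
    refine (hb x).1.tendsto_right_iff.2 fun i _ => ?_
    filter_upwards [eventually_ge_atTop (max k i)] with n hn
    exact (hb x).antitone (le_of_max_le_right hn)
      (hg_near _ _ x (hF_mono (le_of_max_le_left hn) hk))
  · push Not at hx
    refine tendsto_const_nhds.congr fun n => (hg_eq _ _ x fun hxI => hx (n + 1) ?_).symm
    exact Finset.mem_union_right _ hxI

theorem AddSubgroup.kappaFrechetUrysohn_of_single_mem {X G : Type*} [AddGroup G]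
    [TopologicalSpace G] [FirstCountableTopology G] [DecidableEq X]
    (H : AddSubgroup (X → G)) (hH : ∀ x y, Pi.single x y ∈ H) : KappaFrechetUrysohn H := by
  intro U hU h hh
  obtain ⟨V, hV, rfl⟩ := isOpen_induced_iff.1 hU
  have happrox : ∀ (F : Finset X) (W : X → Set G), (∀ x, W x ∈ 𝓝 ((h : X → G) x)) →
      ∃ g ∈ Subtype.val '' (Subtype.val ⁻¹' V : Set H), ∃ I : Finset X,
        (∀ x ∈ F, g x ∈ W x) ∧ ∀ x ∉ I, g x = (h : X → G) x := by
    intro F W hW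
    have hN : interior ((F : Set X).pi W) ∈ 𝓝 (h : X → G) :=
      interior_mem_nhds.2 (set_pi_mem_nhds F.finite_toSet fun x _ => hW x)
    obtain ⟨_, hg₀N, g₀, hg₀V, rfl⟩ := mem_closure_iff_nhds.1 (closure_subtype.1 hh) _ hN
    obtain ⟨I, hI⟩ := exists_finset_forall_piecewise_mem_of_mem_nhds
      ((hV.inter isOpen_interior).mem_nhds ⟨hg₀V, hg₀N⟩)
    have hmem : I.piecewise g₀ h ∈ H := H.piecewise_mem_of_single_mem hH I g₀ h.2
    refine ⟨I.piecewise g₀ h, ⟨⟨_, hmem⟩, (hI h).1, rfl⟩, I,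
      fun x hx => interior_subset (hI h).2 x hx, fun x hx => I.piecewise_eq_of_notMem _ _ hx⟩
  obtain ⟨u, huS, hu⟩ := exists_seq_tendsto_of_forall_finset_approx happrox
  choose v hvU hv using huS
  exact ⟨v, hvU, tendsto_subtype_rng.2 (by simpa only [hv] using hu)⟩

theorem stmt14_general {G X : Type*} [AddCommGroup G] [TopologicalSpace G]
    [TopologicalSpace.MetrizableSpace G]
    [TopologicalSpace X] [T2Space X] [FirstCountableTopology X]
    (hXG : GTychonoff X G) (H : AddSubgroup (X → G))
    (hB1 : ∀ f : X → G,
      (∃ F : ℕ → X → G, (∀ n, Continuous (F n)) ∧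
        ∀ x, Tendsto (fun n => F n x) atTop (𝓝 (f x))) → f ∈ H) :
    KappaFrechetUrysohn ↥H := by
  classical
  exact H.kappaFrechetUrysohn_of_single_mem fun x₀ y =>
    hB1 _ (GTychonoff.exists_continuous_tendsto_single hXG x₀ y)

/-- If `G` is a nontrivial abelian metrizable group, `X` a `G`-Tychonoff first countable
space, and `H` a subgroup of `G^X` containing `B₁(X, G)`, then `H` is κ-Fréchet–Urysohn. -/
theorem stmt14 {G X : Type*} [AddCommGroup G] [TopologicalSpace G] [IsTopologicalAddGroup G]
    [TopologicalSpace.MetrizableSpace G] [Nontrivial G]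
    [TopologicalSpace X] [T2Space X] [FirstCountableTopology X]
    (hXG : GTychonoff X G) (H : AddSubgroup (X → G))
    (hB1 : ∀ f : X → G,
      (∃ F : ℕ → X → G, (∀ n, Continuous (F n)) ∧
        ∀ x, Tendsto (fun n => F n x) atTop (𝓝 (f x))) → f ∈ H) :
    KappaFrechetUrysohn ↥H :=
  stmt14_general hXG H hB1
end

section
/- Let G be a nontrivial abelian metrizable group, X an uncountable G-Tychonoff first countable space, g ∈ G nonzero, and H a subspace of G^X containing σ(𝟎, g) ∪ {𝐠}. Then H does not have countable tightness: the constant function 𝐠 is in the closure of A := σ(𝟎, g) in H, but 𝐠 is not in the closure of any countable subset of A. -/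
open Filter Topology

/-!
The indicators of the finite subsets of `X`, directed by inclusion, converge pointwise to `𝐠`,
so `𝐠 ∈ cl(σ(𝟎, g))`. A countable subset of `σ(𝟎, g)` has a countable union of supports, so
since `X` is uncountable some `x₀` lies outside it; evaluation at `x₀` is continuous and `{0}`
is closed, so every function in the closure vanishes at `x₀`, whereas `𝐠(x₀) = g ≠ 0`.
-/

section SigmaZero

variable {X G : Type*} [Zero G]

variable (X) in
/-- The set `σ(𝟎, g)`. -/
def sigmaZero (g : G) : Set (X → G) :=
  {h | {x | h x ≠ 0}.Finite ∧ ∀ x, h x ≠ 0 → h x = g}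

theorem indicator_const_mem_sigmaZero {s : Set X} (hs : s.Finite) (g : G) :
    s.indicator (fun _ => g) ∈ sigmaZero X g := by
  refine ⟨hs.subset fun x hx => ?_, fun x hx => ?_⟩
  · by_contra hxs
    exact hx (Set.indicator_of_notMem hxs _)
  · by_cases hxs : x ∈ s
    · exact Set.indicator_of_mem hxs _
    · exact absurd (Set.indicator_of_notMem hxs _) hx

theorem tendsto_indicator_finset_atTop [TopologicalSpace G] (f : X → G) :
    Tendsto (fun s : Finset X => (s : Set X).indicator f) atTop (𝓝 f) := by
  refine tendsto_pi_nhds.2 fun x => tendsto_const_nhds.congr' ?_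
  filter_upwards [eventually_ge_atTop {x}] with s hs
  exact (Set.indicator_of_mem (Finset.singleton_subset_iff.1 hs) f).symm

theorem const_mem_closure_sigmaZero [TopologicalSpace G] (g : G) :
    (fun _ : X => g) ∈ closure (sigmaZero X g) :=
  mem_closure_of_tendsto (tendsto_indicator_finset_atTop _)
    (Eventually.of_forall fun s => indicator_const_mem_sigmaZero s.finite_toSet g)

theorem exists_forall_eq_zero_of_countable_supports [Uncountable X] {B : Set (X → G)}
    (hB : B.Countable) (hsupp : ∀ h ∈ B, (Function.support h).Countable) :
    ∃ x, ∀ h ∈ B, h x = 0 := by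
  obtain ⟨x, hx⟩ : (⋃ h ∈ B, Function.support h)ᶜ.Nonempty :=
    Set.nonempty_compl.2 fun hU => Set.not_countable_univ (hU ▸ hB.biUnion hsupp)
  exact ⟨x, fun h hh => Function.notMem_support.1 fun hxh => hx (Set.mem_biUnion hh hxh)⟩

theorem exists_forall_mem_closure_eq_zero [TopologicalSpace G] [T1Space G] [Uncountable X]
    {B : Set (X → G)} (hB : B.Countable) (hsupp : ∀ h ∈ B, (Function.support h).Countable) :
    ∃ x, ∀ h ∈ closure B, h x = 0 := by
  obtain ⟨x, hx⟩ := exists_forall_eq_zero_of_countable_supports hB hsupp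
  have hclosed : IsClosed {h : X → G | h x = 0} := isClosed_singleton.preimage (continuous_apply x)
  exact ⟨x, fun h hh => hclosed.closure_subset_iff.2 hx hh⟩

theorem const_notMem_closure_of_subset_sigmaZero [TopologicalSpace G] [T1Space G]
    [Uncountable X] {g : G} (hg : g ≠ 0) {B : Set (X → G)} (hBσ : B ⊆ sigmaZero X g)
    (hB : B.Countable) : (fun _ : X => g) ∉ closure B := fun hmem => by
  obtain ⟨x, hx⟩ := exists_forall_mem_closure_eq_zero hB fun h hh => (hBσ hh).1.countable
  exact hg (hx _ hmem)

end SigmaZero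

theorem stmt15_general {G X : Type*} [AddCommGroup G] [TopologicalSpace G]
    [TopologicalSpace.MetrizableSpace G]
    [TopologicalSpace X] [Uncountable X]
    (g : G) (hg : g ≠ 0)
    (H : Set (X → G))
    (hσ : {h : X → G | {x | h x ≠ 0}.Finite ∧ ∀ x, h x ≠ 0 → h x = g} ⊆ H)
    (hconst : (fun _ : X => g) ∈ H) :
    (⟨fun _ => g, hconst⟩ : ↥H) ∈
        closure {h : ↥H | {x | h.1 x ≠ 0}.Finite ∧ ∀ x, h.1 x ≠ 0 → h.1 x = g} ∧
      ∀ B ⊆ {h : ↥H | {x | h.1 x ≠ 0}.Finite ∧ ∀ x, h.1 x ≠ 0 → h.1 x = g},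
        B.Countable → (⟨fun _ => g, hconst⟩ : ↥H) ∉ closure B := by
  refine ⟨closure_subtype.2 ?_, fun B hBσ hB => ?_⟩
  · have hσH : Subtype.val '' (Subtype.val ⁻¹' sigmaZero X g : Set H) = sigmaZero X g := by
      rw [Subtype.image_preimage_coe]
      exact Set.inter_eq_right.2 hσ
    exact hσH ▸ const_mem_closure_sigmaZero g
  · rw [closure_subtype]
    exact const_notMem_closure_of_subset_sigmaZero hg (Set.image_subset_iff.2 hBσ) (hB.image _)

/-- `H` does not have countable tightness: the constant function `𝐠` lies in the closure of
`A = σ(𝟎, g)` in `H`, but not in the closure of any countable subset of `A`. -/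
theorem stmt15 {G X : Type*} [AddCommGroup G] [TopologicalSpace G] [IsTopologicalAddGroup G]
    [TopologicalSpace.MetrizableSpace G]
    [TopologicalSpace X] [FirstCountableTopology X] [Uncountable X]
    (hXG : GTychonoff X G) (g : G) (hg : g ≠ 0)
    (H : Set (X → G))
    (hσ : {h : X → G | {x | h x ≠ 0}.Finite ∧ ∀ x, h x ≠ 0 → h x = g} ⊆ H)
    (hconst : (fun _ : X => g) ∈ H) :
    (⟨fun _ => g, hconst⟩ : ↥H) ∈
        closure {h : ↥H | {x | h.1 x ≠ 0}.Finite ∧ ∀ x, h.1 x ≠ 0 → h.1 x = g} ∧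
      ∀ B ⊆ {h : ↥H | {x | h.1 x ≠ 0}.Finite ∧ ∀ x, h.1 x ≠ 0 → h.1 x = g},
        B.Countable → (⟨fun _ => g, hconst⟩ : ↥H) ∉ closure B :=
  stmt15_general g hg H hσ hconst
end

section
/- Let G be a nontrivial abelian metrizable group, X a G-Tychonoff first countable space, g ∈ G nonzero, and H a subspace of G^X containing σ(𝟎, g) ∪ {𝐠}. Then H is metrizable if and only if X is countable. -/
open Filter Topology Function

/-! The constant function `𝐠` is a pointwise limit of finitely supported functions, but along a
sequence only countably many coordinates are ever nonzero; so if `X` is uncountable, `𝐠` lies in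
the closure of `σ(𝟎, g)` without being the limit of a sequence from it, and `H` is not even
Fréchet–Urysohn. Conversely, for countable `X` the whole product `G^X` is metrizable. -/

open TopologicalSpace in
instance TopologicalSpace.metrizableSpace_pi_of_countable {ι : Type*} [Countable ι]
    {A : ι → Type*} [∀ i, TopologicalSpace (A i)] [∀ i, MetrizableSpace (A i)] :
    MetrizableSpace (∀ i, A i) :=
  let := fun i => pseudoMetrizableSpaceUniformity (A i)
  have := fun i => pseudoMetrizableSpaceUniformity_countably_generated (A i)
  inferInstance

section

variable {X G : Type*} [Zero G] [TopologicalSpace G]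

lemma tendsto_indicator_const_atTop (g : G) :
    Tendsto (fun s : Finset X => (s : Set X).indicator fun _ => g) atTop (𝓝 fun _ => g) := by
  refine tendsto_pi_nhds.2 fun x => tendsto_const_nhds.congr' ?_
  filter_upwards [eventually_ge_atTop {x}] with s hs
  simp [Set.indicator_of_mem (Finset.singleton_subset_iff.1 hs)]

lemma support_subset_iUnion_support_of_tendsto [T1Space G] {u : ℕ → X → G} {f : X → G}
    (hu : Tendsto u atTop (𝓝 f)) : support f ⊆ ⋃ n, support (u n) := by
  intro x hx
  by_contra hnot
  have hzero : (fun n => u n x) = fun _ => 0 := by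
    simpa [funext_iff] using hnot
  have hlim := tendsto_pi_nhds.1 hu x
  rw [hzero, tendsto_const_nhds_iff] at hlim
  exact hx hlim.symm

lemma countable_support_of_mem_closure [T1Space G] {H : Set (X → G)} [FrechetUrysohnSpace H]
    {S : Set H} (hS : ∀ h ∈ S, (support (h : X → G)).Countable) {f : H} (hf : f ∈ closure S) :
    (support (f : X → G)).Countable := by
  obtain ⟨u, huS, hu⟩ := mem_closure_iff_seq_limit.1 hf
  exact (Set.countable_iUnion fun n => hS _ (huS n)).mono
    (support_subset_iUnion_support_of_tendsto ((continuous_subtype_val.tendsto f).comp hu))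

end

theorem stmt17_general {G X : Type*} [AddCommGroup G] [TopologicalSpace G]
    [TopologicalSpace.MetrizableSpace G]
    (g : G) (hg : g ≠ 0)
    (H : Set (X → G))
    (hσ : {h : X → G | {x | h x ≠ 0}.Finite ∧ ∀ x, h x ≠ 0 → h x = g} ⊆ H)
    (hconst : (fun _ : X => g) ∈ H) :
    TopologicalSpace.MetrizableSpace ↥H ↔ Countable X := by
  refine ⟨fun _ => ?_, fun _ => inferInstance⟩
  have hmem (s : Finset X) : (s : Set X).indicator (fun _ => g) ∈ H :=
    hσ ⟨s.finite_toSet.subset Set.support_indicator_subset,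
      fun _ hx => Set.indicator_of_mem (Set.mem_of_indicator_ne_zero hx) _⟩
  have hclosure : (⟨_, hconst⟩ : H) ∈ closure {h : H | (support (h : X → G)).Finite} :=
    mem_closure_of_tendsto (f := fun s : Finset X => (⟨_, hmem s⟩ : H))
      (tendsto_subtype_rng.2 (tendsto_indicator_const_atTop g))
      (Eventually.of_forall fun s => s.finite_toSet.subset Set.support_indicator_subset)
  have hcount := countable_support_of_mem_closure (fun _ hh => Set.Finite.countable hh) hclosure
  rwa [support_const hg, Set.countable_univ_iff] at hcount

/-- Let `G` be a nontrivial abelian metrizable group, `X` a `G`-Tychonoff first countable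
space, `g ≠ 0`, and `H ⊆ G^X` containing `σ(𝟎, g) ∪ {𝐠}`. Then `H` is metrizable iff
`X` is countable. -/
theorem stmt17 {G X : Type*} [AddCommGroup G] [TopologicalSpace G] [IsTopologicalAddGroup G]
    [TopologicalSpace.MetrizableSpace G]
    [TopologicalSpace X] [FirstCountableTopology X]
    (hXG : GTychonoff X G) (g : G) (hg : g ≠ 0)
    (H : Set (X → G))
    (hσ : {h : X → G | {x | h x ≠ 0}.Finite ∧ ∀ x, h x ≠ 0 → h x = g} ⊆ H)
    (hconst : (fun _ : X => g) ∈ H) :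
    TopologicalSpace.MetrizableSpace ↥H ↔ Countable X :=
  stmt17_general g hg H hσ hconst
end

section
/- Let G be an abelian metrizable group containing a uniformly discrete sequence (g_n)_{n∈ℕ} (witnessed by a symmetric open neighborhood W of 0 with 0 ∉ g_k + W + W + W + W for all k and g_k − g_n ∉ W + W + W + W for k ≠ n), let X be a G-Tychonoff first countable space, and let H ⊆ G^X contain {𝟎} ∪ ⋃_{n∈ℕ} σ(𝐠_n, 0). Then H (with the pointwise topology) is a k-space if and only if X is countable. -/
/-!
k-spaces are exactly Mathlib's compactly coherent spaces. For countable `X` the space `G^X`, and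
with it `H`, is first countable, hence sequential, hence compactly coherent.

For uncountable `X`, let `Aₙ ⊆ H` be the closed set of functions equal to `gₙ` off at most `n`
points, where they vanish. Every basic neighbourhood of `0` contains a member of some `Aₙ`, so
`0 ∈ closure (⋃ Aₙ)`, while `0 ∉ ⋃ Aₙ` since `X` is infinite and `gₙ ≠ 0`. Yet a compact `K`
meets only finitely many `Aₙ`: choosing one member of each `Aₙ ∩ K`, these countably many
functions all differ from their `gₙ` at countably many points only, so at some `x₀` they take the
values `gₙ`; the compact set `{f x₀ | f ∈ K}` then contains infinitely many of the uniformly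
discrete `gₙ`, which is impossible. So `⋃ Aₙ` has closed trace on every compact set without
being closed.
-/

open Filter Topology Pointwise

/-- A space is a k-space if a set is closed whenever its trace on every compact subset is
closed in that subset. -/
def IsKSpace (Y : Type*) [TopologicalSpace Y] : Prop :=
  ∀ A : Set Y, (∀ K : Set Y, IsCompact K → IsClosed {k : ↥K | (k : Y) ∈ A}) → IsClosed A

theorem isKSpace_iff_compactlyCoherentSpace {Y : Type*} [TopologicalSpace Y] :
    IsKSpace Y ↔ CompactlyCoherentSpace Y :=
  ⟨CompactlyCoherentSpace.of_isClosed, fun _ A ↦ (CompactlyCoherentSpace.isClosed_iff A).2⟩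

theorem CompactlyCoherentSpace.isClosed_iUnion_of_finite_inter_nonempty {Y ι : Type*}
    [TopologicalSpace Y] [CompactlyCoherentSpace Y] {A : ι → Set Y} (hA : ∀ i, IsClosed (A i))
    (hfin : ∀ K, IsCompact K → {i | (A i ∩ K).Nonempty}.Finite) : IsClosed (⋃ i, A i) := by
  refine (CompactlyCoherentSpace.isClosed_iff _).2 fun K hK ↦ ?_
  have htrace : (Subtype.val ⁻¹' ⋃ i, A i : Set K) =
      Subtype.val ⁻¹' ⋃ i ∈ {i | (A i ∩ K).Nonempty}, A i := by
    ext ⟨y, hy⟩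
    simp only [Set.mem_preimage, Set.mem_iUnion, Set.mem_ofPred_eq, exists_prop]
    exact ⟨fun ⟨i, hi⟩ ↦ ⟨i, ⟨y, hi, hy⟩, hi⟩, fun ⟨i, _, hi⟩ ↦ ⟨i, hi⟩⟩
  rw [htrace]
  exact ((hfin K hK).isClosed_biUnion fun i _ ↦ hA i).preimage continuous_subtype_val

theorem IsCompact.finite_setOf_mem_of_sub_notMem {G ι : Type*} [AddGroup G] [TopologicalSpace G]
    [ContinuousSub G] {C : Set G} (hC : IsCompact C) {U : Set G} (hU : U ∈ 𝓝 0) {g : ι → G}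
    (hg : ∀ i j, i ≠ j → g i - g j ∉ U - U) : {i | g i ∈ C}.Finite := by
  obtain ⟨t, -, hCt⟩ := hC.elim_nhds_subcover (fun c ↦ (· - c) ⁻¹' U) fun c _ ↦
    (continuous_sub_right c).continuousAt.preimage_mem_nhds (by rwa [sub_self])
  have hsingle : ∀ c, {i | g i - c ∈ U}.Subsingleton := fun c i hi j hj ↦ by
    by_contra hij
    exact hg i j hij (sub_sub_sub_cancel_right (g i) (g j) c ▸ Set.sub_mem_sub hi hj)
  refine (t.finite_toSet.biUnion fun c _ ↦ (hsingle c).finite).subset fun i hi ↦ ?_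
  simpa using hCt hi

theorem isClosed_setOf_encard_preimage_le {X Y : Type*} [TopologicalSpace Y] {U : Set Y}
    (hU : IsOpen U) (n : ℕ) : IsClosed {f : X → Y | (f ⁻¹' U).encard ≤ n} := by
  refine isOpen_compl_iff.1 (isOpen_iff_forall_mem_open.2 fun f hf ↦ ?_)
  simp only [Set.mem_compl_iff, Set.mem_ofPred_eq, not_le] at hf
  obtain ⟨s, hsU, hs⟩ := Set.exists_subset_encard_eq (Order.add_one_le_of_lt hf)
  have hsfin : s.Finite := Set.finite_of_encard_eq_coe (k := n + 1) (by simpa using hs)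
  refine ⟨⋂ x ∈ s, (fun h : X → Y ↦ h x) ⁻¹' U, fun h hh ↦ ?_,
    hsfin.isOpen_biInter fun x _ ↦ hU.preimage (continuous_apply x), Set.mem_iInter₂.2 hsU⟩
  simp only [Set.mem_compl_iff, Set.mem_ofPred_eq, not_le]
  calc (n : ℕ∞) < n + 1 := by exact_mod_cast n.lt_succ_self
    _ = s.encard := hs.symm
    _ ≤ (h ⁻¹' U).encard := Set.encard_le_encard fun x hx ↦ Set.mem_iInter₂.1 hh x hx

section ConstOffAtMost

variable {X G : Type*} [Zero G]

def constOffAtMost (X : Type*) (a : G) (n : ℕ) : Set (X → G) :=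
  Set.univ.pi (fun _ ↦ {0, a}) ∩ {f | {x | f x ≠ a}.encard ≤ n}

theorem isClosed_constOffAtMost [TopologicalSpace G] [T1Space G] (a : G) (n : ℕ) :
    IsClosed (constOffAtMost X a n) :=
  (isClosed_set_pi fun _ _ ↦ (Set.toFinite _).isClosed).inter
    (isClosed_setOf_encard_preimage_le isOpen_compl_singleton n)

theorem constOffAtMost_subset (a : G) (n : ℕ) :
    constOffAtMost X a n ⊆ {f | {x | f x ≠ a}.Finite ∧ ∀ x, f x ≠ a → f x = 0} :=
  fun _ ⟨hval, hcard⟩ ↦ ⟨Set.finite_of_encard_le_coe hcard, fun x hx ↦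
    (hval x trivial).resolve_right hx⟩

theorem zero_notMem_iUnion_constOffAtMost [Infinite X] {a : ℕ → G} (ha : ∀ n, a n ≠ 0) :
    (0 : X → G) ∉ ⋃ n, constOffAtMost X (a n) n := by
  simp only [Set.mem_iUnion, not_exists]
  intro n ⟨_, hcard⟩
  exact Set.infinite_univ ((Set.finite_of_encard_le_coe hcard).subset fun _ _ ↦ (ha n).symm)

/-- The witnesses vanish on a finite set `I` and equal `a |I|` elsewhere; they tend to `0` as `I`
grows. -/
theorem zero_mem_closure_iUnion_constOffAtMost [TopologicalSpace G] (a : ℕ → G) :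
    (0 : X → G) ∈ closure (⋃ n, constOffAtMost X (a n) n) := by
  classical
  let f : Finset X → X → G := fun I x ↦ if x ∈ I then 0 else a I.card
  have hf : Tendsto f atTop (𝓝 0) := tendsto_pi_nhds.2 fun x ↦
    tendsto_const_nhds.congr' <| (eventually_ge_atTop {x}).mono fun I hI ↦ by
      simp [f, Finset.singleton_subset_iff.1 hI]
  refine mem_closure_of_tendsto hf (Eventually.of_forall fun I ↦ Set.mem_iUnion.2 ⟨I.card, ?_, ?_⟩)
  · intro x _
    by_cases hx : x ∈ I <;> simp [f, hx]
  · calc {x | f I x ≠ a I.card}.encard ≤ (I : Set X).encard :=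
          Set.encard_le_encard fun x hx ↦
            by_contra fun h ↦ hx (by simp [f, Finset.mem_coe.not.1 h])
      _ = I.card := Set.encard_coe_eq_coe_finsetCard I

theorem finite_setOf_constOffAtMost_inter_nonempty [TopologicalSpace G] (hX : ¬ Countable X)
    {a : ℕ → G} (ha : ∀ C : Set G, IsCompact C → {n | a n ∈ C}.Finite) {K : Set (X → G)}
    (hK : IsCompact K) : {n | (constOffAtMost X (a n) n ∩ K).Nonempty}.Finite := by
  set S := {n | (constOffAtMost X (a n) n ∩ K).Nonempty}
  choose! φ hφ using fun n (hn : n ∈ S) ↦ hn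
  have hcount : (⋃ n ∈ S, {x | φ n x ≠ a n}).Countable :=
    S.to_countable.biUnion fun n hn ↦ (Set.finite_of_encard_le_coe (hφ n hn).1.2).countable
  obtain ⟨x₀, hx₀⟩ : ∃ x₀, x₀ ∉ ⋃ n ∈ S, {x | φ n x ≠ a n} := by
    by_contra! h
    exact hX (Set.countable_univ_iff.1 (hcount.mono fun x _ ↦ h x))
  refine (ha _ (hK.image (continuous_apply x₀))).subset fun n hn ↦ ⟨φ n, (hφ n hn).2, ?_⟩
  by_contra h
  exact hx₀ (Set.mem_biUnion hn h)

end ConstOffAtMost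

theorem stmt18_general {G X : Type*} [AddCommGroup G] [TopologicalSpace G] [IsTopologicalAddGroup G]
    [TopologicalSpace.MetrizableSpace G]
    [TopologicalSpace X]
    (W : Set G) (hWo : IsOpen W) (hW0 : (0 : G) ∈ W) (hWs : W = -W)
    (g : ℕ → G)
    (hud1 : ∀ k, (0 : G) ∉ {g k} + W + W + W + W)
    (hud2 : ∀ k n, k ≠ n → g k - g n ∉ W + W + W + W)
    (H : Set (X → G)) (h0 : (0 : X → G) ∈ H)
    (hσ : ∀ n, {h : X → G | {x | h x ≠ g n}.Finite ∧ ∀ x, h x ≠ g n → h x = 0} ⊆ H) :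
    IsKSpace ↥H ↔ Countable X := by
  rw [isKSpace_iff_compactlyCoherentSpace]
  refine ⟨fun _ ↦ ?_, fun _ ↦ inferInstance⟩
  by_contra hX
  have : Infinite X := not_finite_iff_infinite.1 fun h ↦ hX h.to_countable
  have hg0 : ∀ n, g n ≠ 0 := fun n hn ↦ hud1 n <| by
    simpa [hn] using Set.add_mem_add (Set.add_mem_add (Set.add_mem_add
      (Set.add_mem_add (Set.mem_singleton (0 : G)) hW0) hW0) hW0) hW0
  have hWW : W - W ⊆ W + W + W + W := by
    rw [sub_eq_add_neg, ← hWs]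
    exact (Set.subset_add_left _ hW0).trans (Set.subset_add_left _ hW0)
  have hg : ∀ C : Set G, IsCompact C → {n | g n ∈ C}.Finite := fun C hC ↦
    hC.finite_setOf_mem_of_sub_notMem (hWo.mem_nhds hW0) fun k n hkn h ↦ hud2 k n hkn (hWW h)
  let A n := constOffAtMost X (g n) n
  have hAH : ⋃ n, A n ⊆ H := Set.iUnion_subset fun n ↦ (constOffAtMost_subset _ n).trans (hσ n)
  have hclosed : IsClosed (Subtype.val ⁻¹' ⋃ n, A n : Set H) := by
    rw [Set.preimage_iUnion]
    refine CompactlyCoherentSpace.isClosed_iUnion_of_finite_inter_nonempty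
      (fun n ↦ (isClosed_constOffAtMost _ n).preimage continuous_subtype_val) fun K hK ↦
      (finite_setOf_constOffAtMost_inter_nonempty hX hg (hK.image continuous_subtype_val)).subset ?_
    exact fun n ⟨f, hfA, hfK⟩ ↦ ⟨f, hfA, Set.mem_image_of_mem _ hfK⟩
  have h0cl : (⟨0, h0⟩ : H) ∈ closure (Subtype.val ⁻¹' ⋃ n, A n) := by
    rw [closure_subtype, Subtype.image_preimage_coe, Set.inter_eq_right.2 hAH]
    exact zero_mem_closure_iUnion_constOffAtMost g
  exact zero_notMem_iUnion_constOffAtMost hg0 (hclosed.closure_subset h0cl)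

/-- Let `G` be an abelian metrizable group containing a uniformly discrete sequence
`(gₙ)` (witnessed by `W`), `X` a `G`-Tychonoff first countable space, and `H ⊆ G^X`
containing `{𝟎} ∪ ⋃ₙ σ(𝐠ₙ, 0)`. Then `H` is a k-space iff `X` is countable. -/
theorem stmt18 {G X : Type*} [AddCommGroup G] [TopologicalSpace G] [IsTopologicalAddGroup G]
    [TopologicalSpace.MetrizableSpace G]
    [TopologicalSpace X] [FirstCountableTopology X]
    (hXG : GTychonoff X G)
    (W : Set G) (hWo : IsOpen W) (hW0 : (0 : G) ∈ W) (hWs : W = -W)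
    (g : ℕ → G)
    (hud1 : ∀ k, (0 : G) ∉ {g k} + W + W + W + W)
    (hud2 : ∀ k n, k ≠ n → g k - g n ∉ W + W + W + W)
    (H : Set (X → G)) (h0 : (0 : X → G) ∈ H)
    (hσ : ∀ n, {h : X → G | {x | h x ≠ g n}.Finite ∧ ∀ x, h x ≠ g n → h x = 0} ⊆ H) :
    IsKSpace ↥H ↔ Countable X :=
  stmt18_general W hWo hW0 hWs g hud1 hud2 H h0 hσ
end

section
/- Every non-precompact abelian topological group G contains a uniformly discrete sequence: there exist points (g_n)_{n∈ℕ} in G and a symmetric open neighborhood W of 0 such that 0 ∉ g_k + W + W + W + W for every k, and g_k − g_n ∉ W + W + W + W for all distinct k, n. -/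
open Filter Topology Pointwise

/-!
If no finite translate family `F + V` of the neighbourhood `V` covers `G`, one can choose
greedily `gₙ ∉ {0, g₀, …, gₙ₋₁} + V`. Any symmetric open `W` with `W + W + W + W ⊆ V`
then separates the `gₙ` from `0` and from each other.
-/

theorem exists_seq_sub_notMem_of_not_finite_cover {G : Type*} [AddCommGroup G] {V : Set G}
    (hV : ∀ F : Set G, F.Finite → ¬ Set.univ ⊆ F + V) :
    ∃ g : ℕ → G, (∀ n, g n ∉ V) ∧ ∀ m n, m < n → g n - g m ∉ V := by
  refine exists_seq_of_forall_finset_exists (· ∉ V) (fun x y => y - x ∉ V) fun s _ => ?_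
  obtain ⟨y, -, hy⟩ := Set.not_subset.1 (hV (insert 0 ↑s) (s.finite_toSet.insert 0))
  exact ⟨y, fun h => hy ⟨0, Set.mem_insert _ _, y, h, zero_add y⟩,
    fun x hx h => hy ⟨x, Set.mem_insert_of_mem _ hx, y - x, h, add_sub_cancel x y⟩⟩

theorem exists_isOpen_neg_eq_subset {G : Type*} [AddGroup G] [TopologicalSpace G]
    [IsTopologicalAddGroup G] {U : Set G} (hU : U ∈ 𝓝 (0 : G)) :
    ∃ W : Set G, IsOpen W ∧ (0 : G) ∈ W ∧ W = -W ∧ W ⊆ U := by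
  refine ⟨interior U ∩ -interior U, isOpen_interior.inter isOpen_interior.neg,
    ⟨mem_interior_iff_mem_nhds.2 hU, by simpa using mem_interior_iff_mem_nhds.2 hU⟩,
    ?_, fun x hx => interior_subset hx.1⟩
  rw [Set.inter_neg, neg_neg, Set.inter_comm]

/-- Every non-precompact abelian topological group contains a uniformly discrete sequence:
there exist `(gₙ)` and a symmetric open neighborhood `W` of `0` with `0 ∉ gₖ + W + W + W + W`
for all `k` and `gₖ - gₙ ∉ W + W + W + W` for all `k ≠ n`. -/
theorem stmt19 {G : Type*} [AddCommGroup G] [TopologicalSpace G] [IsTopologicalAddGroup G]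
    (hG : ¬ ∀ V ∈ 𝓝 (0 : G), ∃ F : Set G, F.Finite ∧ (Set.univ : Set G) ⊆ F + V) :
    ∃ (g : ℕ → G) (W : Set G), IsOpen W ∧ (0 : G) ∈ W ∧ W = -W ∧
      (∀ k, (0 : G) ∉ {g k} + W + W + W + W) ∧
      ∀ k n, k ≠ n → g k - g n ∉ W + W + W + W := by
  push Not at hG
  obtain ⟨V, hV, hVcover⟩ := hG
  obtain ⟨g, hgV, hg⟩ := exists_seq_sub_notMem_of_not_finite_cover hVcover
  obtain ⟨U, hU, hUV⟩ := exists_nhds_zero_quarter hV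
  obtain ⟨W, hWopen, hW0, hWneg, hWU⟩ := exists_isOpen_neg_eq_subset hU
  have hW4V : W + W + W + W ⊆ V := by
    rintro _ ⟨_, ⟨_, ⟨a, ha, b, hb, rfl⟩, c, hc, rfl⟩, d, hd, rfl⟩
    exact hUV (hWU ha) (hWU hb) (hWU hc) (hWU hd)
  have hW4neg : -(W + W + W + W) = W + W + W + W := by
    simp only [neg_add, ← hWneg]
  refine ⟨g, W, hWopen, hW0, hWneg, fun k hk => ?_, fun k n hkn hkn' => ?_⟩
  · rw [show {g k} + W + W + W + W = {g k} + (W + W + W + W) by simp only [add_assoc]] at hk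
    obtain ⟨_, rfl, w, hw, hsum⟩ := hk
    have hgk : g k = -w := eq_neg_of_add_eq_zero_left hsum
    exact hgV k (hgk ▸ hW4V (hW4neg ▸ Set.neg_mem_neg.2 hw))
  · rcases hkn.lt_or_gt with hlt | hlt
    · rw [← hW4neg, Set.mem_neg, neg_sub] at hkn'
      exact hg k n hlt (hW4V hkn')
    · exact hg n k hlt (hW4V hkn')
end
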